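/- arXiv:2512.05120 — 9 statements merged into one kernel-verified Lean document; each statement's English description precedes it below -/
import Mathlib

section
/- Let F be a free group on a finite set and s ∈ F a nontrivial element. Then for every s₁ ∈ F such that s lies in the cyclic subgroup ⟨s₁⟩ and ⟨s₁⟩ ≠ ⟨s⟩, one has |s₁| < |s|. Consequently, there are only finitely many cyclic subgroups of F that contain s. -/
/-!
Write the reduced word of `x ≠ 1` as `P ++ C ++ P⁻¹` with `C ≠ []` cyclically reduced. Then for
`n ≠ 0` the reduced word of `x ^ n` is `P ++ Cⁿ ++ P⁻¹`, so `|x ^ n| = 2|P| + n|C|` grows strictly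
with `|n|`. If `s = s₁ ^ k` and `⟨s₁⟩ ≠ ⟨s⟩`, then `|k| ≥ 2`, hence `|s₁| < |s|`; so every cyclic
subgroup containing `s` is generated by one of the finitely many words of length at most `|s|`.
-/

namespace FreeGroup

open reduceCyclically

variable {α : Type*} [DecidableEq α]

theorem finite_setOf_norm_le [Finite α] (N : ℕ) : {x : FreeGroup α | x.norm ≤ N}.Finite :=
  (List.finite_length_le _ N).preimage toWord_injective.injOn

theorem norm_pow_of_ne_zero (x : FreeGroup α) {n : ℕ} (hn : n ≠ 0) :
    (x ^ n).norm =
      2 * (conjugator x.toWord).length + n * (reduceCyclically x.toWord).length := by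
  rw [norm, toWord_pow, reduce_flatten_replicate isReduced_toWord, if_neg hn]
  simp only [List.length_append, invRev_length, List.length_flatten, List.map_replicate,
    List.sum_replicate, smul_eq_mul]
  ring

theorem reduceCyclically_toWord_ne_nil {x : FreeGroup α} (hx : x ≠ 1) :
    reduceCyclically x.toWord ≠ [] := by
  intro h
  have hconj := congr_arg mk (conj_conjugator_reduceCyclically x.toWord)
  rw [h, List.append_nil, mk_toWord, ← mul_mk, ← inv_mk, mul_inv_cancel] at hconj
  exact hx hconj.symm

theorem norm_lt_norm_pow {x : FreeGroup α} (hx : x ≠ 1) {n : ℕ} (hn : 2 ≤ n) :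
    x.norm < (x ^ n).norm := by
  have hC := List.length_pos_iff.2 (reduceCyclically_toWord_ne_nil hx)
  have hx₁ := norm_pow_of_ne_zero x one_ne_zero
  rw [pow_one] at hx₁
  rw [hx₁, norm_pow_of_ne_zero x (by omega : n ≠ 0)]
  nlinarith

theorem norm_zpow (x : FreeGroup α) (n : ℤ) : (x ^ n).norm = (x ^ n.natAbs).norm := by
  obtain ⟨m, rfl | rfl⟩ := Int.eq_nat_or_neg n <;> simp [norm_inv_eq]

theorem norm_lt_of_mem_zpowers {s s₁ : FreeGroup α} (hs : s ≠ 1)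
    (hmem : s ∈ Subgroup.zpowers s₁) (hne : Subgroup.zpowers s₁ ≠ Subgroup.zpowers s) :
    s₁.norm < s.norm := by
  obtain ⟨k, rfl⟩ := Subgroup.mem_zpowers_iff.1 hmem
  have hs₁ : s₁ ≠ 1 := by rintro rfl; simp at hs
  have hk₀ : k.natAbs ≠ 0 := by intro hk; simp [Int.natAbs_eq_zero.1 hk] at hs
  have hk₁ : k.natAbs ≠ 1 := by
    intro hk
    rcases Int.natAbs_eq_natAbs_iff.1 (hk.trans Int.natAbs_one.symm) with rfl | rfl
    · simp at hne
    · simp [Subgroup.zpowers_inv] at hne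
  rw [norm_zpow]
  exact norm_lt_norm_pow hs₁ (by omega)

end FreeGroup

/-- Let `F` be a free group on a finite set, `s ≠ 1`. Then any `s₁` whose cyclic
subgroup contains `s` and generates a cyclic subgroup different from `⟨s⟩` has
strictly smaller norm; consequently only finitely many cyclic subgroups of `F`
contain `s`. -/
theorem cyclic_subgroups_containing (α : Type*) [Finite α] [DecidableEq α]
    (s : FreeGroup α) (hs : s ≠ 1) :
    (∀ s₁ : FreeGroup α, s ∈ Subgroup.zpowers s₁ →
        Subgroup.zpowers s₁ ≠ Subgroup.zpowers s → s₁.norm < s.norm) ∧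
    {H : Subgroup (FreeGroup α) |
        (∃ g : FreeGroup α, H = Subgroup.zpowers g) ∧ s ∈ H}.Finite := by
  refine ⟨fun _ => FreeGroup.norm_lt_of_mem_zpowers hs,
    ((FreeGroup.finite_setOf_norm_le s.norm).image Subgroup.zpowers).subset ?_⟩
  rintro H ⟨⟨g, rfl⟩, hsH⟩
  by_cases heq : Subgroup.zpowers g = Subgroup.zpowers s
  · exact ⟨s, le_refl s.norm, heq.symm⟩
  · exact ⟨g, (FreeGroup.norm_lt_of_mem_zpowers hs hsH heq).le, rfl⟩
end

section
/- Let F be a free group on a finite set and N ≥ 1. For every group homomorphism f from the free abelian group ℤ^N to F there exist an element s ∈ F and integers c₁, …, c_N such that f(x₁, …, x_N) = s^{c₁x₁ + ⋯ + c_N x_N} for all (x₁, …, x_N) ∈ ℤ^N. In particular, the image of f is a cyclic subgroup of F. -/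
/-!
The range of `f` is a commutative subgroup of a free group, hence itself free
(Nielsen–Schreier). Distinct generators of a free group never commute (send them to
non-commuting transpositions in `S₃`), so this free group has at most one generator and is
cyclic, say generated by `s`. Writing `f(eᵢ) = s ^ cᵢ` on the standard
basis, additivity of `f` gives `f(x) = s ^ (c₁x₁ + ⋯ + c_N x_N)`.
-/

open Subgroup

theorem FreeGroup.eq_of_commute_of {X : Type*} {x y : X}
    (h : Commute (FreeGroup.of x) (FreeGroup.of y)) : x = y := by
  classical
  by_contra hxy
  let k : X → Equiv.Perm (Fin 3) := fun z => if z = x then Equiv.swap 0 1 else Equiv.swap 1 2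
  have hk := h.map (FreeGroup.lift k)
  simp only [FreeGroup.lift_apply_of, k, ↓reduceIte, if_neg (Ne.symm hxy)] at hk
  exact absurd hk.eq (by decide)

theorem IsFreeGroup.isCyclic_of_commute {G : Type*} [Group G] [IsFreeGroup G]
    (h : ∀ a b : G, Commute a b) : IsCyclic G := by
  let e := IsFreeGroup.toFreeGroup G
  have : Subsingleton (IsFreeGroup.Generators G) :=
    ⟨fun x y => FreeGroup.eq_of_commute_of <| by
      simpa using (h (e.symm (.of x)) (e.symm (.of y))).map e.toMonoidHom⟩
  have : IsCyclic (FreeGroup (IsFreeGroup.Generators G)) := by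
    rcases isEmpty_or_nonempty (IsFreeGroup.Generators G) with _ | ⟨⟨x⟩⟩
    · exact isCyclic_of_subsingleton
    · have := uniqueOfSubsingleton x
      infer_instance
  exact isCyclic_of_surjective e.symm.toMonoidHom e.symm.surjective

theorem MonoidHom.exists_range_eq_zpowers_of_freeGroup {A X : Type*} [CommGroup A]
    (f : A →* FreeGroup X) : ∃ g : FreeGroup X, f.range = zpowers g := by
  have : IsCyclic f.range := IsFreeGroup.isCyclic_of_commute fun ⟨_, a, ha⟩ ⟨_, b, hb⟩ =>
    Subtype.ext <| ha ▸ hb ▸ (Commute.all a b).map f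
  exact (f.range.isCyclic_iff_exists_zpowers_eq_top.mp this).imp fun _ => Eq.symm

theorem MonoidHom.apply_ofAdd_eq_zpow_sum {ι G : Type*} [Fintype ι] [DecidableEq ι]
    [Group G] (f : Multiplicative (ι → ℤ) →* G) (s : G) (c : ι → ℤ)
    (hc : ∀ i, f (Multiplicative.ofAdd (Pi.single i 1)) = s ^ c i) (x : ι → ℤ) :
    f (Multiplicative.ofAdd x) = s ^ ∑ i, c i * x i := by
  induction x using Pi.single_induction with
  | zero => simp
  | add x y hx hy =>
    rw [ofAdd_add, map_mul, hx, hy, ← zpow_add]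
    simp only [Pi.add_apply, mul_add, Finset.sum_add_distrib]
  | single i m =>
    have : Pi.single i m = m • (Pi.single i 1 : ι → ℤ) := by simp [← Pi.single_smul]
    rw [this, ofAdd_zsmul, map_zpow, hc, ← zpow_mul]
    simp [Pi.single_apply]

theorem hom_from_zn_to_freeGroup_general (α : Type*) (N : ℕ)
    (f : Multiplicative (Fin N → ℤ) →* FreeGroup α) :
    ∃ (s : FreeGroup α) (c : Fin N → ℤ),
      (∀ x : Fin N → ℤ, f (Multiplicative.ofAdd x) = s ^ (∑ i, c i * x i)) ∧
      ∃ g : FreeGroup α, f.range = Subgroup.zpowers g := by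
  obtain ⟨s, hs⟩ := f.exists_range_eq_zpowers_of_freeGroup
  have hbasis : ∀ i, f (Multiplicative.ofAdd (Pi.single i 1)) ∈ zpowers s :=
    fun i => hs ▸ ⟨_, rfl⟩
  choose c hc using fun i => mem_zpowers_iff.mp (hbasis i)
  exact ⟨s, c, f.apply_ofAdd_eq_zpow_sum s c fun i => (hc i).symm, s, hs⟩

/-- Every group homomorphism from the free abelian group `ℤ^N` (`N ≥ 1`) to a free
group `F` on a finite set has the form `x ↦ s ^ (c₁x₁ + ⋯ + c_N x_N)`; in
particular its image is a cyclic subgroup of `F`. -/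
theorem hom_from_zn_to_freeGroup (α : Type*) [Finite α] (N : ℕ) (hN : 1 ≤ N)
    (f : Multiplicative (Fin N → ℤ) →* FreeGroup α) :
    ∃ (s : FreeGroup α) (c : Fin N → ℤ),
      (∀ x : Fin N → ℤ, f (Multiplicative.ofAdd x) = s ^ (∑ i, c i * x i)) ∧
      ∃ g : FreeGroup α, f.range = Subgroup.zpowers g :=
  hom_from_zn_to_freeGroup_general α N f
end

section
/- Let (A, B) be a PCSP template, F a free group on a finite set, m ≥ 1, and φ: Pol(A, B) → Pol(ℤ^m, F) a minion homomorphism. Then there exists a number N ∈ ℕ such that for every f ∈ Pol(A, B), the essential arity of φ(f) is at most N. -/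
/-!
Each `φ(f)` is a homomorphism `(ℤ^m)ⁿ → F`, so its essential coordinates are among those `i`
whose coordinate embedding it does not kill. Identifying all coordinates in a set `C` to
coordinate `1` of a binary minor `f_C`, the minor condition gives `φ(f_C)(0, z) = φ(f)(z·1_C)`.
Group those `i` by the binary minor `f_{i}`: within one group every `φ(f)(z·e_i)` is the same
`g ≠ 1`, hence `φ(f_C)(0, z) = g ^ |C|` for `C` inside the group. Since free groups are
torsion-free, subsets of different sizes have different minors `f_C`, so a group is smaller than
the number `K` of binary polymorphisms. There are at most `K` groups, so `N = K²` works.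
-/

/-- `f : Aⁿ → B` is a polymorphism of the pair of similar relational structures
given by relations `RA i ⊆ A^(ar i)` and `RB i ⊆ B^(ar i)`. -/
def IsPolymorphism {A B : Type*} {w : ℕ} {ar : Fin w → ℕ}
    (RA : ∀ i, Set (Fin (ar i) → A)) (RB : ∀ i, Set (Fin (ar i) → B))
    {n : ℕ} (f : (Fin n → A) → B) : Prop :=
  ∀ i : Fin w, ∀ ts : Fin n → (Fin (ar i) → A),
    (∀ j, ts j ∈ RA i) → (fun p => f (fun j => ts j p)) ∈ RB i

theorem IsPolymorphism.comp {A B : Type*} {w : ℕ} {ar : Fin w → ℕ}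
    {RA : ∀ i, Set (Fin (ar i) → A)} {RB : ∀ i, Set (Fin (ar i) → B)}
    {n n' : ℕ} {f : (Fin n → A) → B} (hf : IsPolymorphism RA RB f) (π : Fin n → Fin n') :
    IsPolymorphism RA RB (fun x : Fin n' → A => f (fun j => x (π j))) :=
  fun i ts hts => hf i (fun j => ts (π j)) (fun j => hts (π j))

theorem Finset.card_lt_natCard_of_map_eq_imp_card_eq {ι β : Type*} [Finite β] {T : Finset ι}
    (e : Finset ι → β) (he : ∀ C ⊆ T, ∀ D ⊆ T, e C = e D → C.card = D.card) :
    T.card < Nat.card β := by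
  have hsize : ∀ s : Fin (T.card + 1), ∃ C ⊆ T, C.card = s :=
    fun s => Finset.exists_subset_card_eq (Nat.lt_succ_iff.mp s.2)
  choose C hCT hCcard using hsize
  have hinj : Function.Injective (fun s => e (C s)) := fun s t hst =>
    Fin.ext (by rw [← hCcard s, ← hCcard t]; exact he _ (hCT s) _ (hCT t) hst)
  simpa using Nat.card_le_card_of_injective _ hinj

section EssentialCoordinates

variable {ι M G : Type*} [DecidableEq ι]

theorem exists_map_single_ne_one_of_ne [AddGroup M] [MulOneClass G] {Ψ : (ι → M) → G}
    (hΨ : ∀ x y, Ψ (x + y) = Ψ x * Ψ y) {i : ι} {x y : ι → M}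
    (hxy : ∀ j, j ≠ i → x j = y j) (hne : Ψ x ≠ Ψ y) :
    ∃ z, Ψ (Pi.single i z) ≠ 1 := by
  refine ⟨x i - y i, fun h => hne ?_⟩
  have hx : x = Pi.single i (x i - y i) + y := by
    funext j
    by_cases hj : j = i
    · subst hj; simp
    · simp [hj, hxy j hj]
  rw [hx, hΨ, h, one_mul]

theorem map_ite_mem_eq_pow_card [AddMonoid M] [LeftCancelMonoid G] {Ψ : (ι → M) → G}
    (hΨ : ∀ x y, Ψ (x + y) = Ψ x * Ψ y) {z : M} {g : G} (C : Finset ι)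
    (hC : ∀ i ∈ C, Ψ (Pi.single i z) = g) :
    Ψ (fun j => if j ∈ C then z else 0) = g ^ C.card := by
  induction C using Finset.induction_on with
  | empty =>
    have h0 := hΨ 0 0
    rw [add_zero, left_eq_mul] at h0
    simp only [Finset.notMem_empty, if_false, Finset.card_empty, pow_zero]
    exact h0
  | @insert a C haC ih =>
    have hsplit : (fun j => if j ∈ insert a C then z else 0)
        = Pi.single a z + fun j => if j ∈ C then z else 0 := by
      funext j
      by_cases hj : j = a
      · subst hj; simp [haC]
      · simp [hj]
    rw [hsplit, hΨ, ih (fun i hi => hC i (Finset.mem_insert_of_mem hi)),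
      hC a (Finset.mem_insert_self a C), Finset.card_insert_of_notMem haC, pow_succ']

variable [Fintype ι] [AddGroup M] [CancelMonoid G] [IsMulTorsionFree G] {β : Type*} [Finite β]

theorem ncard_essential_le {Ψ : (ι → M) → G} (hΨ : ∀ x y, Ψ (x + y) = Ψ x * Ψ y)
    (e : Finset ι → β) (F : β → M → G)
    (hF : ∀ C z, Ψ (fun j => if j ∈ C then z else 0) = F (e C) z) :
    {i : ι | ∃ x y : ι → M, (∀ j, j ≠ i → x j = y j) ∧ Ψ x ≠ Ψ y}.ncard
      ≤ Nat.card β * Nat.card β := by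
  classical
  have hsingle : ∀ i z, Ψ (Pi.single i z) = F (e {i}) z := fun i z => by
    rw [← hF]
    congr 1
    funext j
    by_cases hj : j = i
    · subst hj; simp
    · simp [hj]
  set S := Finset.univ.filter fun i => ∃ z, Ψ (Pi.single i z) ≠ 1
  have hessential_subset :
      {i : ι | ∃ x y : ι → M, (∀ j, j ≠ i → x j = y j) ∧ Ψ x ≠ Ψ y} ⊆ S := by
    rintro i ⟨x, y, hxy, hne⟩
    simpa [S] using exists_map_single_ne_one_of_ne hΨ hxy hne
  have hfiber : ∀ p ∈ S.image (fun i => e {i}),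
      (S.filter fun i => e {i} = p).card ≤ Nat.card β := by
    intro p hp
    obtain ⟨i₀, hi₀S, rfl⟩ := Finset.mem_image.mp hp
    obtain ⟨z, hz⟩ := (Finset.mem_filter.mp hi₀S).2
    have hpow : ∀ C ⊆ S.filter (fun i => e {i} = e {i₀}),
        F (e C) z = Ψ (Pi.single i₀ z) ^ C.card := fun C hC => by
      rw [← hF]
      refine map_ite_mem_eq_pow_card hΨ C fun i hi => ?_
      rw [hsingle, hsingle, (Finset.mem_filter.mp (hC hi)).2]
    refine (Finset.card_lt_natCard_of_map_eq_imp_card_eq e fun C hC D hD hCD => ?_).le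
    refine IsMulTorsionFree.pow_right_injective hz ?_
    simp only [← hpow C hC, ← hpow D hD, hCD]
  calc _ ≤ S.card := by simpa using Set.ncard_le_ncard hessential_subset S.finite_toSet
    _ ≤ Nat.card β * (S.image fun i => e {i}).card :=
      Finset.card_le_mul_card_image S _ hfiber
    _ ≤ Nat.card β * Nat.card β := by
      have := Fintype.ofFinite β
      rw [Nat.card_eq_fintype_card]
      exact Nat.mul_le_mul_left _ (Finset.card_le_univ _)

end EssentialCoordinates

theorem bounded_essential_arity_of_minion_hom_to_freeGroup_general
    {A B : Type} [Finite A] [Finite B]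
    (w : ℕ) (ar : Fin w → ℕ)
    (RA : ∀ i, Set (Fin (ar i) → A)) (RB : ∀ i, Set (Fin (ar i) → B))
    {α : Type} (m : ℕ)
    (φ : ∀ n : ℕ, {f : (Fin n → A) → B // IsPolymorphism RA RB f} →
        ((Fin n → (Fin m → ℤ)) → FreeGroup α))
    (hhom : ∀ n f, ∀ x y : Fin n → (Fin m → ℤ), φ n f (x + y) = φ n f x * φ n f y)
    (hminor : ∀ (n n' : ℕ) (π : Fin n → Fin n')
        (f : {f : (Fin n → A) → B // IsPolymorphism RA RB f})
        (g : {g : (Fin n' → A) → B // IsPolymorphism RA RB g}),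
        (∀ x, g.1 x = f.1 (fun j => x (π j))) →
        ∀ x, φ n' g x = φ n f (fun j => x (π j))) :
    ∃ N : ℕ, ∀ (n : ℕ) (f : {f : (Fin n → A) → B // IsPolymorphism RA RB f}),
      {i : Fin n | ∃ x y : Fin n → (Fin m → ℤ),
        (∀ j, j ≠ i → x j = y j) ∧ φ n f x ≠ φ n f y}.ncard ≤ N := by
  let K := Nat.card {g : (Fin 2 → A) → B // IsPolymorphism RA RB g}
  refine ⟨K * K, fun n f => ?_⟩
  let collapse (C : Finset (Fin n)) : {g : (Fin 2 → A) → B // IsPolymorphism RA RB g} :=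
    ⟨_, f.2.comp fun j => if j ∈ C then 1 else 0⟩
  refine ncard_essential_le (hhom n f) collapse (fun g z => φ 2 g (Pi.single 1 z)) fun C z => ?_
  rw [hminor n 2 _ f (collapse C) (fun _ => rfl)]
  congr 1
  funext j
  split_ifs <;> simp

/-- If `(A, B)` is a PCSP template, `F` a free group on a finite set, `m ≥ 1`, and
`φ : Pol(A,B) → Pol(ℤ^m, F)` a minion homomorphism (it sends every polymorphism
to a group homomorphism `(ℤ^m)ⁿ → F` of the same arity and preserves minors),
then there is `N` bounding the essential arity of `φ(f)` for every
`f ∈ Pol(A, B)`. -/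
theorem bounded_essential_arity_of_minion_hom_to_freeGroup
    {A B : Type} [Finite A] [Finite B]
    (w : ℕ) (ar : Fin w → ℕ)
    (RA : ∀ i, Set (Fin (ar i) → A)) (RB : ∀ i, Set (Fin (ar i) → B))
    (htemplate : ∃ h : A → B, ∀ i : Fin w, ∀ t ∈ RA i, (fun p => h (t p)) ∈ RB i)
    {α : Type} [Finite α] (m : ℕ) (hm : 1 ≤ m)
    (φ : ∀ n : ℕ, {f : (Fin n → A) → B // IsPolymorphism RA RB f} →
        ((Fin n → (Fin m → ℤ)) → FreeGroup α))
    (hhom : ∀ n f, ∀ x y : Fin n → (Fin m → ℤ), φ n f (x + y) = φ n f x * φ n f y)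
    (hminor : ∀ (n n' : ℕ) (π : Fin n → Fin n')
        (f : {f : (Fin n → A) → B // IsPolymorphism RA RB f})
        (g : {g : (Fin n' → A) → B // IsPolymorphism RA RB g}),
        (∀ x, g.1 x = f.1 (fun j => x (π j))) →
        ∀ x, φ n' g x = φ n f (fun j => x (π j))) :
    ∃ N : ℕ, ∀ (n : ℕ) (f : {f : (Fin n → A) → B // IsPolymorphism RA RB f}),
      {i : Fin n | ∃ x y : Fin n → (Fin m → ℤ),
        (∀ j, j ≠ i → x j = y j) ∧ φ n f x ≠ φ n f y}.ncard ≤ N :=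
  bounded_essential_arity_of_minion_hom_to_freeGroup_general w ar RA RB m φ hhom hminor
end

section
/- Let A, B be finite sets, M a function minion on (A, B), F an Abelian-bounded group, k ≥ 1, and φ: M → Pol(ℤ^k, F) a minion homomorphism. Then there exist numbers P, N ∈ ℕ such that for every n ∈ ℕ and every f ∈ M^{(n)} with φ(f) not the trivial homomorphism, there exist r ≤ P pairwise commuting elements s₁, …, s_r ∈ F and integer vectors c̄_{ij} ∈ ℤ^k (i ∈ [n], j ∈ [r]) such that φ(f)(x̄₁, …, x̄ₙ) = ∏_{j=1}^{r} s_j^{c̄_{1j}·x̄₁ + ⋯ + c̄_{nj}·x̄ₙ} for all x̄₁, …, x̄ₙ ∈ ℤ^k, and |c̄_{11}| + ⋯ + |c̄_{nr}| ≤ N, where c̄·x̄ is the standard dot product and |c̄| is the sum of the absolute values of the coordinates of c̄. -/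
/-- A subgroup is abelian if all its elements commute. -/
def IsAbelianSubgroup {G : Type*} [Group G] (H : Subgroup G) : Prop :=
  ∀ a ∈ H, ∀ b ∈ H, a * b = b * a

/-- A maximal abelian subgroup. -/
def IsMaximalAbelianSubgroup {G : Type*} [Group G] (H : Subgroup G) : Prop :=
  IsAbelianSubgroup H ∧ ∀ K : Subgroup G, IsAbelianSubgroup K → H ≤ K → K = H

/-- A group is Abelian-bounded if (A1) every abelian subgroup is a finitely
generated free abelian group, and (A2) every nontrivial abelian subgroup is
contained in only finitely many maximal abelian subgroups. -/
def AbelianBounded (G : Type*) [Group G] : Prop :=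
  (∀ H : Subgroup G, IsAbelianSubgroup H →
      ∃ n : ℕ, Nonempty (H ≃* Multiplicative (Fin n → ℤ))) ∧
  (∀ H : Subgroup G, IsAbelianSubgroup H → H ≠ ⊥ →
      {K : Subgroup G | IsMaximalAbelianSubgroup K ∧ H ≤ K}.Finite)


/-!
Write `m` for the number of binary members of `M`. Since `φ` commutes with minors, whether two
binary minors of `φ(f)` agree is decided by the corresponding binary minors of `f`, so `φ(f)` has
at most `m` binary minors. Group the essential coordinates `i` of `φ(f)` by the minor that sends `i`
to `0` and all other coordinates to `1`. Coordinates in one group `I` take the same value `t` on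
unit vectors, so collapsing a `d`-element subset of `I` gives a binary minor whose first
coordinate evaluates to `t ^ d`; as `F` has no torsion, the subsets of sizes `0, …, |I|` yield
pairwise distinct minors, whence `|I| < m`. So `φ(f)` has at most `m²` essential coordinates, and
it is the product of the powers of the images of the `k m²` corresponding unit vectors, which
commute because `ℤ^{kn}` is abelian.
-/

open Finset Function Multiplicative

theorem AbelianBounded.not_isOfFinOrder {F : Type*} [Group F] (hF : AbelianBounded F) {t : F}
    (ht : t ≠ 1) : ¬IsOfFinOrder t := by
  obtain ⟨d, ⟨e⟩⟩ := hF.1 (Subgroup.zpowers t) fun a ha b hb => by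
    obtain ⟨m, rfl⟩ := Subgroup.mem_zpowers_iff.1 ha
    obtain ⟨m', rfl⟩ := Subgroup.mem_zpowers_iff.1 hb
    exact ((Commute.refl t).zpow_zpow m m').eq
  have := e.injective.isMulTorsionFree e.toMonoidHom
  have ht' : (⟨t, Subgroup.mem_zpowers t⟩ : Subgroup.zpowers t) ≠ 1 := by simpa using ht
  exact fun hfin => not_isOfFinOrder_of_isMulTorsionFree ht'
    ((Subgroup.subtype_injective _).isOfFinOrder_iff.1 hfin)

def binaryCollapse {ι : Type*} [DecidableEq ι] (J : Finset ι) (i : ι) : Fin 2 :=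
  if i ∈ J then 0 else 1

section

variable {ι V G : Type*} [DecidableEq ι] [AddMonoid V] [Monoid G]

theorem single_zero_comp_binaryCollapse (J : Finset ι) (v : V) :
    (Pi.single 0 v : Fin 2 → V) ∘ binaryCollapse J = fun i => if i ∈ J then v else 0 := by
  funext i
  by_cases hi : i ∈ J <;> simp [binaryCollapse, hi]

theorem map_ofAdd_ite_mem_eq_pow (ψ : Multiplicative (ι → V) →* G) (J : Finset ι) (v : V)
    {t : G} (ht : ∀ i ∈ J, ψ (ofAdd (Pi.single i v)) = t) :
    ψ (ofAdd fun i => if i ∈ J then v else 0) = t ^ J.card := by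
  induction J using Finset.induction_on with
  | empty =>
    simp only [notMem_empty, if_false, card_empty, pow_zero]
    exact map_one ψ
  | @insert a J ha ih =>
    have hsplit : (fun i => if i ∈ insert a J then v else 0) =
        Pi.single a v + fun i => if i ∈ J then v else 0 := by
      funext i
      by_cases hia : i = a <;> simp [hia, ha]
    rw [hsplit, ofAdd_add, map_mul, ht a (mem_insert_self a J),
      ih fun i hi => ht i (mem_insert_of_mem hi), card_insert_of_notMem ha, pow_succ']

end

def BinaryMinorsDeterminedBy {ι V G β : Type*} [AddZeroClass V] [MulOneClass G]
    (ψ : Multiplicative (ι → V) →* G) (g : (ι → Fin 2) → β) : Prop :=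
  ∀ π π', g π = g π' → ∀ x : Fin 2 → V, ψ (ofAdd (x ∘ π)) = ψ (ofAdd (x ∘ π'))

section

variable {ι V G β : Type*} [DecidableEq ι] [AddMonoid V] [LeftCancelMonoid G] [Fintype β]
  (ψ : Multiplicative (ι → V) →* G) (g : (ι → Fin 2) → β)

theorem card_lt_card_of_forall_binaryCollapse_singleton_eq (hg : BinaryMinorsDeterminedBy ψ g)
    (htf : ∀ t : G, t ≠ 1 → ¬IsOfFinOrder t) {I : Finset ι} {b : β}
    (hI : ∀ i ∈ I, g (binaryCollapse {i}) = b) {i₀ : ι} {v : V} (hi₀ : i₀ ∈ I)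
    (hv : ψ (ofAdd (Pi.single i₀ v)) ≠ 1) : I.card < Fintype.card β := by
  set t := ψ (ofAdd (Pi.single i₀ v))
  have single_eq (i : ι) (hi : i ∈ I) : ψ (ofAdd (Pi.single i v)) = t := by
    simpa [single_zero_comp_binaryCollapse, ← Pi.single_apply] using
      hg _ _ ((hI i hi).trans (hI i₀ hi₀).symm) (Pi.single 0 v)
  have collapse_eq (J : Finset ι) (hJ : J ⊆ I) :
      ψ (ofAdd ((Pi.single 0 v : Fin 2 → V) ∘ binaryCollapse J)) = t ^ J.card := by
    rw [single_zero_comp_binaryCollapse]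
    exact map_ofAdd_ite_mem_eq_pow ψ J v fun i hi => single_eq i (hJ hi)
  choose J hJI hJcard using fun d : Fin (I.card + 1) =>
    exists_subset_card_eq (Nat.lt_succ_iff.1 d.2)
  have hinj : Injective fun d => g (binaryCollapse (J d)) := fun d d' h => by
    have := hg _ _ h (Pi.single 0 v)
    rw [collapse_eq _ (hJI d), collapse_eq _ (hJI d'), hJcard, hJcard] at this
    exact Fin.ext (injective_pow_iff_not_isOfFinOrder.2 (htf t hv) this)
  simpa using Fintype.card_le_of_injective _ hinj

theorem card_le_card_mul_card_of_forall_exists_ne_one (hg : BinaryMinorsDeterminedBy ψ g)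
    (htf : ∀ t : G, t ≠ 1 → ¬IsOfFinOrder t) (I : Finset ι)
    (hI : ∀ i ∈ I, ∃ v : V, ψ (ofAdd (Pi.single i v)) ≠ 1) :
    I.card ≤ Fintype.card β * Fintype.card β := by
  classical
  calc I.card ≤ Fintype.card β * (I.image fun i => g (binaryCollapse {i})).card :=
        card_le_mul_card_image I _ fun b hb => by
          obtain ⟨i₀, hi₀, rfl⟩ := mem_image.1 hb
          obtain ⟨v, hv⟩ := hI i₀ hi₀
          exact (card_lt_card_of_forall_binaryCollapse_singleton_eq ψ g hg htf
            (fun i hi => (mem_filter.1 hi).2) (mem_filter.2 ⟨hi₀, rfl⟩) hv).le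
    _ ≤ Fintype.card β * Fintype.card β := Nat.mul_le_mul_left _ (card_le_univ _)

end

section

variable {ι κ G : Type*} [Fintype ι] [DecidableEq ι] [Fintype κ] [DecidableEq κ] [Group G]

theorem ofAdd_eq_prod_zpow_single (x : ι → κ → ℤ) :
    ofAdd x = ∏ i, ∏ v, ofAdd (Pi.single i (Pi.single v 1) : ι → κ → ℤ) ^ x i v := by
  simp_rw [← ofAdd_zsmul, ← ofAdd_sum]
  congr 1
  ext i v
  simp [Finset.sum_apply, Pi.single_apply, apply_ite (fun f : κ → ℤ => f v)]

theorem map_ofAdd_eq_list_prod (ψ : Multiplicative (ι → κ → ℤ) →* G) (S : Finset ι)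
    (hS : ∀ i ∉ S, ∀ v, ψ (ofAdd (Pi.single i (Pi.single v 1))) = 1) {r : ℕ} (e : Fin r ≃ S × κ)
    (x : ι → κ → ℤ) :
    ψ (ofAdd x) = ((List.finRange r).map fun j =>
      ψ (ofAdd (Pi.single (e j).1.1 (Pi.single (e j).2 1))) ^ x (e j).1 (e j).2).prod := by
  set b : ι → κ → Multiplicative (ι → κ → ℤ) := fun i v => ofAdd (Pi.single i (Pi.single v 1))
  have outside : ψ (∏ i ∈ Sᶜ, ∏ v, b i v ^ x i v) = 1 :=
    Subgroup.prod_mem ψ.ker fun i hi => Subgroup.prod_mem _ fun v _ =>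
      zpow_mem (hS i (mem_compl.1 hi) v) _
  calc ψ (ofAdd x) = ψ (∏ i ∈ S, ∏ v, b i v ^ x i v) := by
        rw [ofAdd_eq_prod_zpow_single, ← prod_mul_prod_compl S, map_mul, outside, mul_one]
    _ = ψ (∏ p : S × κ, b p.1 p.2 ^ x p.1 p.2) := by
        rw [Fintype.prod_prod_type, ← Finset.prod_coe_sort S]
    _ = ψ (∏ j, b (e j).1 (e j).2 ^ x (e j).1 (e j).2) := by
        rw [e.prod_comp fun p => b p.1 p.2 ^ x p.1 p.2]
    _ = _ := by simp [Fin.prod_univ_def, map_list_prod, Function.comp_def, b]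

theorem sum_sum_single_single_mul (a : ι) (w : κ) (x : ι → κ → ℤ) :
    ∑ i, ∑ v, (Pi.single a (Pi.single w 1) : ι → κ → ℤ) i v * x i v = x a w := by
  rw [Fintype.sum_eq_single a fun i hi => by simp [hi]]
  simp [Pi.single_apply]

theorem sum_sum_natAbs_single_single (a : ι) (w : κ) :
    ∑ i, ∑ v, ((Pi.single a (Pi.single w 1) : ι → κ → ℤ) i v).natAbs = 1 := by
  rw [Fintype.sum_eq_single a fun i hi => by simp [hi]]
  simp [Pi.single_apply, apply_ite Int.natAbs]

theorem exists_commuting_zpow_repr (ψ : Multiplicative (ι → κ → ℤ) →* G) (S : Finset ι)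
    (hS : ∀ i ∉ S, ∀ v, ψ (ofAdd (Pi.single i (Pi.single v 1))) = 1) :
    ∃ (s : Fin (Fintype.card (S × κ)) → G) (c : ι → Fin (Fintype.card (S × κ)) → κ → ℤ),
      (∀ j j', s j * s j' = s j' * s j) ∧
      (∀ x, ψ (ofAdd x) = ((List.finRange _).map
        fun j => s j ^ (∑ i, ∑ v, c i j v * x i v)).prod) ∧
      ∑ i, ∑ j, ∑ v, (c i j v).natAbs = Fintype.card (S × κ) := by
  set e := (Fintype.equivFin (S × κ)).symm
  refine ⟨fun j => ψ (ofAdd (Pi.single (e j).1.1 (Pi.single (e j).2 1))),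
    fun i j => (Pi.single (e j).1.1 (Pi.single (e j).2 1) : ι → κ → ℤ) i,
    fun j j' => ((Commute.all _ _).map ψ).eq, fun x => ?_, ?_⟩
  · simp only [sum_sum_single_single_mul]
    exact map_ofAdd_eq_list_prod ψ S hS e x
  · rw [sum_comm]
    simp only [sum_sum_natAbs_single_single, sum_const, card_univ, Fintype.card_fin, smul_eq_mul,
      mul_one]

end

theorem minion_hom_to_abelianBounded_group_general
    {A B : Type} [Finite A] [Finite B]
    (M : ∀ n : ℕ, Set ((Fin n → A) → B))
    (hMminor : ∀ (n n' : ℕ) (π : Fin n → Fin n') (f : (Fin n → A) → B),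
        f ∈ M n → (fun x : Fin n' → A => f (fun j => x (π j))) ∈ M n')
    {F : Type} [Group F] (hF : AbelianBounded F)
    (k : ℕ)
    (φ : ∀ n : ℕ, {f : (Fin n → A) → B // f ∈ M n} → ((Fin n → (Fin k → ℤ)) → F))
    (hhom : ∀ n f, ∀ x y : Fin n → (Fin k → ℤ), φ n f (x + y) = φ n f x * φ n f y)
    (hminor : ∀ (n n' : ℕ) (π : Fin n → Fin n')
        (f : {f : (Fin n → A) → B // f ∈ M n})
        (g : {g : (Fin n' → A) → B // g ∈ M n'}),
        (∀ x, g.1 x = f.1 (fun j => x (π j))) →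
        ∀ x, φ n' g x = φ n f (fun j => x (π j))) :
    ∃ P N : ℕ, ∀ (n : ℕ) (f : {f : (Fin n → A) → B // f ∈ M n}),
      (∃ x, φ n f x ≠ 1) →
      ∃ (r : ℕ) (_ : r ≤ P) (s : Fin r → F) (c : Fin n → Fin r → (Fin k → ℤ)),
        (∀ j j' : Fin r, s j * s j' = s j' * s j) ∧
        (∀ x : Fin n → (Fin k → ℤ),
          φ n f x = ((List.finRange r).map
            (fun j => s j ^ (∑ i, ∑ v, c i j v * x i v))).prod) ∧
        (∑ i, ∑ j, ∑ v, (c i j v).natAbs) ≤ N := by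
  classical
  let M₂ := {g // g ∈ M 2}
  have : Fintype M₂ := Fintype.ofFinite M₂
  refine ⟨Fintype.card M₂ * Fintype.card M₂ * k, Fintype.card M₂ * Fintype.card M₂ * k,
    fun n f _ => ?_⟩
  let ψ : Multiplicative (Fin n → Fin k → ℤ) →* F :=
    MonoidHom.mk' (fun x => φ n f x.toAdd) fun x y => hhom n f x.toAdd y.toAdd
  let minor (π : Fin n → Fin 2) : M₂ := ⟨_, hMminor n 2 π f.1 f.2⟩
  have minor_determines : BinaryMinorsDeterminedBy ψ minor := fun π π' h x => by
    calc φ n f (x ∘ π) = φ 2 (minor π) x := (hminor n 2 π f _ (fun _ => rfl) x).symm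
      _ = φ 2 (minor π') x := by rw [h]
      _ = φ n f (x ∘ π') := hminor n 2 π' f _ (fun _ => rfl) x
  set S := univ.filter fun i => ∃ v, ψ (ofAdd (Pi.single i v)) ≠ 1
  have hS : S.card ≤ Fintype.card M₂ * Fintype.card M₂ :=
    card_le_card_mul_card_of_forall_exists_ne_one ψ minor minor_determines
      (fun _ => hF.not_isOfFinOrder) S fun i hi => (mem_filter.1 hi).2
  obtain ⟨s, c, hcomm, hrepr, hsize⟩ := exists_commuting_zpow_repr ψ S fun i hi v =>
    not_not.1 fun h => hi (mem_filter.2 ⟨mem_univ i, _, h⟩)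
  have hr : Fintype.card (S × Fin k) ≤ Fintype.card M₂ * Fintype.card M₂ * k := by
    simpa using Nat.mul_le_mul_right k hS
  exact ⟨_, hr, s, c, hcomm, hrepr, hsize.trans_le hr⟩

/-- If `M` is a function minion on finite sets `(A, B)`, `F` an Abelian-bounded
group, and `φ : M → Pol(ℤ^k, F)` a minion homomorphism, then there are `P, N`
such that every `φ(f)` which is not the trivial homomorphism has the form
`x̄ ↦ ∏_{j≤r} s_j ^ (c̄_{1j}·x̄₁ + ⋯ + c̄_{nj}·x̄ₙ)` with `r ≤ P`, commuting
`s_j`, and total coefficient size at most `N`. -/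
theorem minion_hom_to_abelianBounded_group
    {A B : Type} [Finite A] [Finite B]
    (M : ∀ n : ℕ, Set ((Fin n → A) → B))
    (hMne : ∃ n f, f ∈ M n)
    (hMminor : ∀ (n n' : ℕ) (π : Fin n → Fin n') (f : (Fin n → A) → B),
        f ∈ M n → (fun x : Fin n' → A => f (fun j => x (π j))) ∈ M n')
    {F : Type} [Group F] (hF : AbelianBounded F)
    (k : ℕ) (hk : 1 ≤ k)
    (φ : ∀ n : ℕ, {f : (Fin n → A) → B // f ∈ M n} → ((Fin n → (Fin k → ℤ)) → F))
    (hhom : ∀ n f, ∀ x y : Fin n → (Fin k → ℤ), φ n f (x + y) = φ n f x * φ n f y)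
    (hminor : ∀ (n n' : ℕ) (π : Fin n → Fin n')
        (f : {f : (Fin n → A) → B // f ∈ M n})
        (g : {g : (Fin n' → A) → B // g ∈ M n'}),
        (∀ x, g.1 x = f.1 (fun j => x (π j))) →
        ∀ x, φ n' g x = φ n f (fun j => x (π j))) :
    ∃ P N : ℕ, ∀ (n : ℕ) (f : {f : (Fin n → A) → B // f ∈ M n}),
      (∃ x, φ n f x ≠ 1) →
      ∃ (r : ℕ) (_ : r ≤ P) (s : Fin r → F) (c : Fin n → Fin r → (Fin k → ℤ)),
        (∀ j j' : Fin r, s j * s j' = s j' * s j) ∧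
        (∀ x : Fin n → (Fin k → ℤ),
          φ n f x = ((List.finRange r).map
            (fun j => s j ^ (∑ i, ∑ v, c i j v * x i v))).prod) ∧
        (∑ i, ∑ j, ∑ v, (c i j v).natAbs) ≤ N :=
  minion_hom_to_abelianBounded_group_general M hMminor hF k φ hhom hminor
end

section
/- Let (H, μ) be a μ-structure of prime order ℓ, and let u₁, …, u_{k-1}, μ(u₁) be a path in G(H). Let C be the cycle u₁, u₂, …, u_{k-1}, μ(u₁), μ(u₂), …, μ(u_{k-1}), μ²(u₁), …, μ^{ℓ-1}(u₁), …, μ^{ℓ-1}(u_{k-1}), u₁. For an ordered pair (u, v) of vertices, let N(uv) be the number of indices at which C steps from u to v. Then there exists a pair (u, v) of consecutive vertices of C such that N(uv) ≠ N(vu). -/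
/-- A (combinatorial) simplicial complex on the vertex set `V`: a downward-closed
family of nonempty finite sets (faces) containing every singleton. -/
structure SComplex (V : Type*) where
  faces : Set (Finset V)
  down_closed : ∀ σ ∈ faces, ∀ τ : Finset V, τ ⊆ σ → τ.Nonempty → τ ∈ faces
  singleton_mem : ∀ v : V, {v} ∈ faces

namespace SComplex

variable {V : Type*} (K : SComplex V)

/-- Two vertices lie in a common face (adjacency in the graph `G(H)`,
allowing `u = v`). -/
def inFace (u v : V) : Prop := ∃ σ ∈ K.faces, u ∈ σ ∧ v ∈ σ

/-- A path: a nonempty sequence of vertices, every two consecutive of which lie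
in a common face. -/
def IsPath (p : List V) : Prop := p ≠ [] ∧ p.Chain' K.inFace

/-- A cycle based at `t`: a path starting and ending at `t`. -/
def IsCycleAt (t : V) (p : List V) : Prop :=
  K.IsPath p ∧ p.head? = some t ∧ p.getLast? = some t

/-- One elementary expansion: insert a vertex `x` between consecutive vertices
`a, b` provided `a, x, b` lie in a common face. -/
inductive Step : List V → List V → Prop
  | expand (l₁ l₂ : List V) (a x b : V)
      (h : ∃ σ ∈ K.faces, a ∈ σ ∧ x ∈ σ ∧ b ∈ σ) :
      Step (l₁ ++ a :: b :: l₂) (l₁ ++ a :: x :: b :: l₂)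

/-- Two paths are homotopic if one can be transformed into the other by a finite
sequence of expansions and contractions. -/
def Homotopic : List V → List V → Prop :=
  Relation.ReflTransGen (fun p q => K.Step p q ∨ K.Step q p)

/-- Reachability in the graph `G(H)`. -/
def Reach : V → V → Prop := Relation.ReflTransGen K.inFace

/-- A maximal face. -/
def IsMaxFace (σ : Finset V) : Prop :=
  σ ∈ K.faces ∧ ∀ τ ∈ K.faces, σ ⊆ τ → τ = σ

end SComplex

/-- The middle portion `t₁, …, t_{k-1}, μ(t₁), …, μ(t_{k-1}), …, μ^{ℓ-1}(t₁), …,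
μ^{ℓ-1}(t_{k-1})` of a μ-cycle, where `q = [t₁, …, t_{k-1}]`. -/
def muMiddle {V : Type*} (μ : Equiv.Perm V) (ℓ : ℕ) (q : List V) : List V :=
  (List.range ℓ).flatMap fun i => q.map ⇑(μ ^ i)

/-- `C` is a μ-cycle starting at `t`: `C = P, t₁, …, t_{k-1}, μ(t₁), …,
μ^{ℓ-1}(t_{k-1}), t₁, P⁻¹` where `P` is a path from `t` to `t₁` and
`t₁, …, t_{k-1}, μ(t₁)` is a path from `t₁` to `μ(t₁)`. -/
def IsMuCycle {V : Type*} (K : SComplex V) (μ : Equiv.Perm V) (ℓ : ℕ)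
    (t : V) (C : List V) : Prop :=
  ∃ (t₁ : V) (p q : List V),
    K.IsPath p ∧ p.head? = some t ∧ p.getLast? = some t₁ ∧
    q.head? = some t₁ ∧ K.IsPath (q ++ [μ t₁]) ∧
    C = p.dropLast ++ muMiddle μ ℓ q ++ [t₁] ++ p.reverse.drop 1


section ListAux

variable {V : Type*}

/-- steps of a list -/
def stp (l : List V) : List (V × V) := l.zip l.tail

lemma stp_nil : stp ([] : List V) = [] := rfl
lemma stp_single (a : V) : stp [a] = [] := rfl
lemma stp_cons_cons (a b : V) (t : List V) :
    stp (a :: b :: t) = (a, b) :: stp (b :: t) := by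
  simp [stp, List.zip_cons_cons]

lemma stp_append_of_head (l₂ : List V) (h : V) (hh : l₂.head? = some h) :
    ∀ l₁ : List V, stp (l₁ ++ l₂) = stp (l₁ ++ [h]) ++ stp l₂ := by
  obtain ⟨l₂', rfl⟩ : ∃ t, l₂ = h :: t := by
    cases l₂ with
    | nil => simp at hh
    | cons a t => simp at hh; exact ⟨t, by rw [hh]⟩
  intro l₁
  induction l₁ with
  | nil => simp [stp_single]
  | cons a l₁' ih =>
    cases l₁' with
    | nil => simp [stp_cons_cons, stp_single]
    | cons b t =>
      simp only [List.cons_append, stp_cons_cons] at *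
      simp [ih]

lemma stp_map (f : V → V) (l : List V) :
    stp (l.map f) = (stp l).map (Prod.map f f) := by
  simp [stp, ← List.map_tail, List.zip_map]

lemma mem_stp_chain' {R : V → V → Prop} :
    ∀ {l : List V}, l.Chain' R → ∀ e ∈ stp l, R e.1 e.2 := by
  intro l
  induction l with
  | nil => intro _ e he; simp [stp_nil] at he
  | cons a t ih =>
    cases t with
    | nil => intro _ e he; simp [stp_single] at he
    | cons b t' =>
      intro hc e he
      rw [stp_cons_cons] at he
      rcases List.mem_cons.mp he with rfl | he'
      · exact (List.isChain_cons_cons.mp hc).1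
      · exact ih (List.isChain_cons_cons.mp hc).2 e he'

end ListAux

section EvenAux

lemma even_card_of_invol {α : Type*} [DecidableEq α] (f : α → α)
    (hf : ∀ x, f (f x) = x) :
    ∀ M : Multiset α, M.map f = M → (∀ x ∈ M, f x ≠ x) → Even (Multiset.card M) := by
  have hinj : Function.Injective f := fun a b h => by rw [← hf a, h, hf]
  intro M
  induction M using Multiset.strongInductionOn with
  | _ M ih =>
    intro hM hfix
    by_cases h0 : M = 0
    · simp [h0]
    obtain ⟨x, hx⟩ := Multiset.exists_mem_of_ne_zero h0
    have hcnt : ∀ a, Multiset.count (f a) M = Multiset.count a M := by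
      intro a
      conv_lhs => rw [← hM]
      rw [Multiset.count_map_eq_count' f M hinj]
    have hfxM : f x ∈ M := by
      have hx' : x ∈ Multiset.map f M := hM.symm ▸ hx
      obtain ⟨y, hy, hyx⟩ := Multiset.mem_map.mp hx'
      rw [← hyx, hf]; exact hy
    have hne : f x ≠ x := hfix x hx
    have hxfM : f x ∈ M.erase x := (Multiset.mem_erase_of_ne hne).mpr hfxM
    set M' := (M.erase x).erase (f x) with hM'
    have hrec : M = x ::ₘ f x ::ₘ M' := by
      rw [hM', Multiset.cons_erase hxfM, Multiset.cons_erase hx]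
    have c1 : Multiset.count (f x) M' = Multiset.count (f x) M - 1 := by
      rw [hM', Multiset.count_erase_self, Multiset.count_erase_of_ne hne]
    have c2 : Multiset.count x M' = Multiset.count x M - 1 := by
      rw [hM', Multiset.count_erase_of_ne (Ne.symm hne), Multiset.count_erase_self]
    have hkey : ∀ a, Multiset.count (f a) M' = Multiset.count a M' := by
      intro a
      by_cases hax : a = x
      · subst hax; rw [c1, c2, hcnt]
      by_cases haf : a = f x
      · subst haf
        rw [hf, c2, c1, hcnt]
      · have h1 : f a ≠ f x := fun h => hax (hinj h)
        have h2 : f a ≠ x := fun h => haf (by rw [← h, hf])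
        rw [hM', Multiset.count_erase_of_ne h1, Multiset.count_erase_of_ne h2,
          Multiset.count_erase_of_ne haf, Multiset.count_erase_of_ne hax, hcnt]
    have hmapM' : M'.map f = M' := by
      ext a
      conv_lhs => rw [show a = f (f a) from (hf a).symm]
      rw [Multiset.count_map_eq_count' f M' hinj, hkey]
    have hfix' : ∀ a ∈ M', f a ≠ a := by
      intro a ha
      apply hfix
      have : M' ≤ M := le_trans (Multiset.erase_le _ _) (Multiset.erase_le _ _)
      exact Multiset.mem_of_le this ha
    have hlt : M' < M := by
      rw [hrec]
      calc M' < f x ::ₘ M' := Multiset.lt_cons_self _ _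
        _ < x ::ₘ f x ::ₘ M' := Multiset.lt_cons_self _ _
    have hev := ih M' hlt hmapM' hfix'
    rw [hrec]
    simp only [Multiset.card_cons]
    rcases hev with ⟨m, hm⟩
    exact ⟨m + 1, by omega⟩

end EvenAux

section GAux

variable {V : Type*} (μ : Equiv.Perm V) (ℓ : ℕ)

lemma mu_pow_apply_pow (i : ℕ) (hℓ : 0 < ℓ) (horder : μ ^ ℓ = 1) (v : V) :
    (μ ^ (i * (ℓ - 1))) ((μ ^ i) v) = v := by
  have h : (μ ^ (i * (ℓ - 1))) * μ ^ i = 1 := by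
    rw [← pow_add]
    have hh : i * (ℓ - 1) + i = ℓ * i := by
      obtain ⟨m, rfl⟩ : ∃ m, ℓ = m + 1 := ⟨ℓ - 1, (Nat.succ_pred_eq_of_pos hℓ).symm⟩
      simp [Nat.mul_comm]; ring
    rw [hh, pow_mul, horder, one_pow]
  calc (μ ^ (i * (ℓ - 1))) ((μ ^ i) v) = ((μ ^ (i * (ℓ - 1))) * μ ^ i) v := rfl
    _ = v := by rw [h]; rfl

/-- the orbit setoid of `μ` -/
def muSetoid (hℓ : 0 < ℓ) (horder : μ ^ ℓ = 1) : Setoid V :=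
  ⟨fun u v => ∃ i : ℕ, (μ ^ i) u = v,
    ⟨fun v => ⟨0, by simp⟩,
     fun {u v} h => by
      obtain ⟨i, rfl⟩ := h
      exact ⟨i * (ℓ - 1), mu_pow_apply_pow μ ℓ i hℓ horder u⟩,
     fun {u v w} h h' => by
      obtain ⟨i, rfl⟩ := h
      obtain ⟨j, rfl⟩ := h'
      exact ⟨j + i, by rw [pow_add]; rfl⟩⟩⟩

/-- orbit representative -/
noncomputable def muRep (hℓ : 0 < ℓ) (horder : μ ^ ℓ = 1) (v : V) : V :=
  (Quotient.mk (muSetoid μ ℓ hℓ horder) v).out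

lemma muRep_spec (hℓ : 0 < ℓ) (horder : μ ^ ℓ = 1) (v : V) :
    ∃ i : ℕ, (μ ^ i) (muRep μ ℓ hℓ horder v) = v :=
  @Quotient.mk_out V (muSetoid μ ℓ hℓ horder) v

/-- potential function -/
noncomputable def muG (hℓ : 0 < ℓ) (horder : μ ^ ℓ = 1) (v : V) : ZMod ℓ :=
  ((muRep_spec μ ℓ hℓ horder v).choose : ZMod ℓ)

lemma mu_pow_mod (horder : μ ^ ℓ = 1) (n : ℕ) : μ ^ n = μ ^ (n % ℓ) := by
  conv_lhs => rw [← Nat.div_add_mod n ℓ]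
  rw [pow_add, pow_mul, horder, one_pow, one_mul]

lemma mu_cast_zero (hℓ : 0 < ℓ) (horder : μ ^ ℓ = 1)
    (hfreeV : ∀ (v : V) (i : ℕ), 0 < i → i < ℓ → (μ ^ i) v ≠ v)
    (v : V) (j : ℕ) (h : (μ ^ j) v = v) : (j : ZMod ℓ) = 0 := by
  have h2 : (μ ^ (j % ℓ)) v = v := by rw [← mu_pow_mod μ ℓ horder]; exact h
  have h3 : j % ℓ = 0 := by
    by_contra hc
    exact hfreeV v (j % ℓ) (Nat.pos_of_ne_zero hc) (Nat.mod_lt _ hℓ) h2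
  exact (ZMod.natCast_eq_zero_iff j ℓ).mpr (Nat.dvd_of_mod_eq_zero h3)

lemma mu_pow_congr (horder : μ ^ ℓ = 1) (a b : ℕ) (h : (a : ZMod ℓ) = (b : ZMod ℓ)) :
    μ ^ a = μ ^ b := by
  have hmod : a % ℓ = b % ℓ := (ZMod.natCast_eq_natCast_iff a b ℓ).mp h
  rw [mu_pow_mod μ ℓ horder a, mu_pow_mod μ ℓ horder b, hmod]

lemma cast_pred (hℓ : 0 < ℓ) : ((ℓ - 1 : ℕ) : ZMod ℓ) = -1 := by
  have : ((ℓ - 1 : ℕ) : ZMod ℓ) = (ℓ : ZMod ℓ) - 1 := by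
    rw [Nat.cast_sub hℓ]; simp
  rw [this, ZMod.natCast_self]; ring

lemma muG_eq (hℓ : 0 < ℓ) (horder : μ ^ ℓ = 1)
    (hfreeV : ∀ (v : V) (i : ℕ), 0 < i → i < ℓ → (μ ^ i) v ≠ v)
    (v : V) (i : ℕ) (h : (μ ^ i) (muRep μ ℓ hℓ horder v) = v) :
    muG μ ℓ hℓ horder v = (i : ZMod ℓ) := by
  set r := muRep μ ℓ hℓ horder v with hr
  have hspec : (μ ^ (muRep_spec μ ℓ hℓ horder v).choose) r = v :=
    (muRep_spec μ ℓ hℓ horder v).choose_spec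
  set i₀ := (muRep_spec μ ℓ hℓ horder v).choose with hi₀
  have hrv : (μ ^ (i₀ * (ℓ - 1))) v = r := by
    rw [← hspec]; exact mu_pow_apply_pow μ ℓ i₀ hℓ horder r
  have hfix : (μ ^ (i + i₀ * (ℓ - 1))) v = v := by
    rw [pow_add]
    show (μ ^ i) ((μ ^ (i₀ * (ℓ - 1))) v) = v
    rw [hrv]; exact h
  have h0 := mu_cast_zero μ ℓ hℓ horder hfreeV v _ hfix
  push_cast at h0
  rw [cast_pred ℓ hℓ] at h0
  have hG : muG μ ℓ hℓ horder v = (i₀ : ZMod ℓ) := rfl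
  rw [hG]
  linear_combination -h0

lemma muRep_mk_eq (hℓ : 0 < ℓ) (horder : μ ^ ℓ = 1) (u v : V)
    (h : Quotient.mk (muSetoid μ ℓ hℓ horder) u = Quotient.mk (muSetoid μ ℓ hℓ horder) v) :
    muRep μ ℓ hℓ horder u = muRep μ ℓ hℓ horder v :=
  congrArg Quotient.out h

lemma mk_mu_pow (hℓ : 0 < ℓ) (horder : μ ^ ℓ = 1) (i : ℕ) (v : V) :
    Quotient.mk (muSetoid μ ℓ hℓ horder) ((μ ^ i) v) = Quotient.mk (muSetoid μ ℓ hℓ horder) v :=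
  Quotient.sound ⟨i * (ℓ - 1), mu_pow_apply_pow μ ℓ i hℓ horder v⟩

lemma muG_mu_pow (hℓ : 0 < ℓ) (horder : μ ^ ℓ = 1)
    (hfreeV : ∀ (v : V) (i : ℕ), 0 < i → i < ℓ → (μ ^ i) v ≠ v)
    (i : ℕ) (v : V) :
    muG μ ℓ hℓ horder ((μ ^ i) v) = muG μ ℓ hℓ horder v + (i : ZMod ℓ) := by
  obtain ⟨j, hj⟩ := muRep_spec μ ℓ hℓ horder v
  have hrep : muRep μ ℓ hℓ horder ((μ ^ i) v) = muRep μ ℓ hℓ horder v :=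
    muRep_mk_eq μ ℓ hℓ horder _ _ (mk_mu_pow μ ℓ hℓ horder i v)
  have hwit : (μ ^ (i + j)) (muRep μ ℓ hℓ horder ((μ ^ i) v)) = (μ ^ i) v := by
    rw [hrep, pow_add]
    show (μ ^ i) ((μ ^ j) (muRep μ ℓ hℓ horder v)) = (μ ^ i) v
    rw [hj]
  rw [muG_eq μ ℓ hℓ horder hfreeV _ _ hwit, muG_eq μ ℓ hℓ horder hfreeV v j hj]
  push_cast; ring

lemma mu_step_eq (hℓ : 0 < ℓ) (horder : μ ^ ℓ = 1)
    (hfreeV : ∀ (v : V) (i : ℕ), 0 < i → i < ℓ → (μ ^ i) v ≠ v)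
    (u v : V)
    (hmk : Quotient.mk (muSetoid μ ℓ hℓ horder) u = Quotient.mk (muSetoid μ ℓ hℓ horder) v)
    (hg : muG μ ℓ hℓ horder v = muG μ ℓ hℓ horder u + 1) : v = μ u := by
  obtain ⟨i, hi⟩ := muRep_spec μ ℓ hℓ horder u
  obtain ⟨i', hi'⟩ := muRep_spec μ ℓ hℓ horder v
  have hrep : muRep μ ℓ hℓ horder v = muRep μ ℓ hℓ horder u :=
    (muRep_mk_eq μ ℓ hℓ horder u v hmk).symm
  have hru := mu_pow_apply_pow μ ℓ i hℓ horder (muRep μ ℓ hℓ horder u)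
  rw [hi] at hru
  have hv : (μ ^ (i' + i * (ℓ - 1))) u = v := by
    rw [pow_add]
    show (μ ^ i') ((μ ^ (i * (ℓ - 1))) u) = v
    rw [hru, ← hrep]; exact hi'
  have hgu := muG_eq μ ℓ hℓ horder hfreeV u i hi
  have hgv := muG_eq μ ℓ hℓ horder hfreeV v i' (hrep ▸ hi')
  have hcast : ((i' + i * (ℓ - 1) : ℕ) : ZMod ℓ) = ((1 : ℕ) : ZMod ℓ) := by
    push_cast
    rw [cast_pred ℓ hℓ]
    have : (i' : ZMod ℓ) = (i : ZMod ℓ) + 1 := by rw [← hgu, ← hgv, hg]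
    rw [this]; ring
  have := mu_pow_congr μ ℓ horder _ _ hcast
  rw [this, pow_one] at hv
  exact hv.symm

end GAux

section RevAux

def revE {Q A : Type*} [Neg A] (t : (Q × Q) × A) : (Q × Q) × A := ((t.1.2, t.1.1), -t.2)

lemma revE_invol {Q A : Type*} [InvolutiveNeg A] (t : (Q × Q) × A) : revE (revE t) = t := by
  simp [revE]

lemma revE_inj {Q A : Type*} [InvolutiveNeg A] :
    Function.Injective (revE (Q := Q) (A := A)) := fun a b h => by
  rw [← revE_invol a, h, revE_invol]

lemma zmod_ne_zero_eq_one : ∀ n : ℕ, n = 2 → ∀ a : ZMod n, a ≠ 0 → a = 1 := by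
  rintro n rfl
  decide

lemma even_cast_zmod_two : ∀ n : ℕ, Even n → (n : ZMod 2) = 0 := by
  rintro n ⟨m, rfl⟩
  push_cast
  ring_nf
  rw [show (2 : ZMod 2) = 0 from rfl]
  ring

end RevAux

section CoreAux

lemma core_contradiction {Q : Type*} (ℓ : ℕ) (hℓ : ℓ.Prime)
    (M₀ : Multiset ((Q × Q) × ZMod ℓ))
    (hrev : M₀.map revE = M₀)
    (hsum : (M₀.map (fun t => t.2)).sum = 1)
    (hfix2 : ℓ = 2 → ∀ t ∈ M₀, t.1.1 = t.1.2 → t.2 = 0) : False := by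
  classical
  haveI : NeZero ℓ := ⟨hℓ.pos.ne'⟩
  have h1 : (M₀.map (fun t => t.2)).sum = -(M₀.map (fun t => t.2)).sum := by
    conv_lhs => rw [← hrev]
    rw [Multiset.map_map]
    rw [show ((fun t : (Q × Q) × ZMod ℓ => t.2) ∘ revE) = fun t : (Q × Q) × ZMod ℓ => -(t.2)
      from rfl]
    rw [Multiset.sum_map_neg]
  rw [hsum] at h1
  have h2 : ((2 : ℕ) : ZMod ℓ) = 0 := by push_cast; linear_combination h1
  have hdvd : ℓ ∣ 2 := (ZMod.natCast_eq_zero_iff 2 ℓ).mp h2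
  have hl2 : ℓ = 2 := (Nat.prime_dvd_prime_iff_eq hℓ Nat.prime_two).mp hdvd
  have hfix := hfix2 hl2
  subst hl2
  set T := M₀.filter (fun t => t.2 ≠ 0) with hT
  have hrevcnt : ∀ a, Multiset.count (revE a) M₀ = Multiset.count a M₀ := by
    intro a
    conv_lhs => rw [← hrev]
    exact Multiset.count_map_eq_count' _ _ revE_inj a
  have hTrev : T.map revE = T := by
    ext a
    conv_lhs => rw [show a = revE (revE a) from (revE_invol a).symm]
    rw [Multiset.count_map_eq_count' _ _ revE_inj]
    rw [hT, Multiset.count_filter, Multiset.count_filter]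
    rw [hrevcnt]
    exact if_congr (by simp [revE, neg_ne_zero]) rfl rfl
  have hTnofix : ∀ t ∈ T, revE t ≠ t := by
    intro t ht heq
    rw [hT, Multiset.mem_filter] at ht
    have h11 : t.1.1 = t.1.2 := by
      have := congrArg (fun x => x.1.1) heq
      simpa [revE] using this.symm
    exact ht.2 (hfix t ht.1 h11)
  have heven : Even (Multiset.card T) :=
    even_card_of_invol revE revE_invol T hTrev hTnofix
  have hsplit := Multiset.filter_add_not (fun t => t.2 ≠ 0) M₀
  have hsum2 : (M₀.map (fun t => t.2)).sum
      = (T.map (fun t => t.2)).sum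
        + ((M₀.filter (fun t => ¬ t.2 ≠ 0)).map (fun t => t.2)).sum := by
    conv_lhs => rw [← hsplit]
    rw [Multiset.map_add, Multiset.sum_add]
  have hzero : ((M₀.filter (fun t => ¬ t.2 ≠ 0)).map (fun t => t.2)).sum = 0 := by
    apply Multiset.sum_eq_zero
    intro x hx
    obtain ⟨t, ht, rfl⟩ := Multiset.mem_map.mp hx
    have := (Multiset.mem_filter.mp ht).2
    simpa using this
  have hrepl : T.map (fun t => t.2) = Multiset.replicate (Multiset.card T) 1 := by
    apply Multiset.eq_replicate.mpr
    constructor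
    · simp
    · intro b hb
      obtain ⟨t, ht, rfl⟩ := Multiset.mem_map.mp hb
      exact zmod_ne_zero_eq_one 2 rfl _ (Multiset.mem_filter.mp ht).2
  rw [hsum2, hzero, hrepl, Multiset.sum_replicate, add_zero] at hsum
  rw [nsmul_eq_mul, mul_one] at hsum
  rw [even_cast_zmod_two _ heven] at hsum
  exact zero_ne_one hsum

end CoreAux

section PhatAux

variable {V : Type*} (μ : Equiv.Perm V) (ℓ : ℕ) (hℓ : 0 < ℓ) (horder : μ ^ ℓ = 1)

/-- projection of a directed edge to the quotient voltage edge -/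
noncomputable def phat (e : V × V) :
    (Quotient (muSetoid μ ℓ hℓ horder) × Quotient (muSetoid μ ℓ hℓ horder)) × ZMod ℓ :=
  ((Quotient.mk _ e.1, Quotient.mk _ e.2),
    muG μ ℓ hℓ horder e.2 - muG μ ℓ hℓ horder e.1)

lemma phat_pmap (hfreeV : ∀ (v : V) (i : ℕ), 0 < i → i < ℓ → (μ ^ i) v ≠ v)
    (i : ℕ) (e : V × V) :
    phat μ ℓ hℓ horder (Prod.map ⇑(μ ^ i) ⇑(μ ^ i) e) = phat μ ℓ hℓ horder e := by
  unfold phat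
  refine Prod.ext (Prod.ext ?_ ?_) ?_
  · exact mk_mu_pow μ ℓ hℓ horder i e.1
  · exact mk_mu_pow μ ℓ hℓ horder i e.2
  · show muG μ ℓ hℓ horder ((μ ^ i) e.2) - muG μ ℓ hℓ horder ((μ ^ i) e.1) = _
    rw [muG_mu_pow μ ℓ hℓ horder hfreeV i e.2, muG_mu_pow μ ℓ hℓ horder hfreeV i e.1]
    ring

lemma phat_swap (e : V × V) :
    revE (phat μ ℓ hℓ horder e) = phat μ ℓ hℓ horder e.swap := by
  unfold phat revE
  simp [neg_sub]

lemma tele_sum {A : Type*} [AddCommGroup A] (g : V → A) :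
    ∀ (l : List V) (a b : V),
      ((stp (a :: (l ++ [b]))).map (fun e : V × V => g e.2 - g e.1)).sum = g b - g a := by
  intro l
  induction l with
  | nil => intro a b; simp [stp_cons_cons, stp_single]
  | cons c t ih =>
    intro a b
    rw [List.cons_append, stp_cons_cons, List.map_cons, List.sum_cons, ih c b]
    abel

end PhatAux

/-- let `(H, μ)` be a μ-structure of prime order `ℓ` and let
`u₁, …, u_{k-1}, μ(u₁)` be a path in `G(H)` (given by `q = [u₁, …, u_{k-1}]`).
Consider the cycle `C = u₁, …, u_{k-1}, μ(u₁), …, μ^{ℓ-1}(u_{k-1}), u₁` and for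
an ordered pair `(u, v)` let `N(uv)` be the number of steps of `C` from `u` to
`v`. Then some pair of consecutive vertices `(u, v)` of `C` satisfies
`N(uv) ≠ N(vu)`. -/
theorem muCycle_asymmetric_edge {V : Type*} [DecidableEq V] (K : SComplex V)
    (μ : Equiv.Perm V) (ℓ : ℕ) (hℓ : ℓ.Prime) (horder : μ ^ ℓ = 1)
    (hfaces : ∀ σ ∈ K.faces, σ.image ⇑μ ∈ K.faces)
    (hfree : ∀ σ ∈ K.faces, ∀ i : ℕ, 0 < i → i < ℓ → σ.image ⇑(μ ^ i) ≠ σ)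
    (u₁ : V) (q : List V) (hq : q.head? = some u₁)
    (hpath : K.IsPath (q ++ [μ u₁])) :
    ∃ u v : V, (u, v) ∈ (muMiddle μ ℓ q ++ [u₁]).zip (muMiddle μ ℓ q ++ [u₁]).tail ∧
      ((muMiddle μ ℓ q ++ [u₁]).zip (muMiddle μ ℓ q ++ [u₁]).tail).count (u, v) ≠
      ((muMiddle μ ℓ q ++ [u₁]).zip (muMiddle μ ℓ q ++ [u₁]).tail).count (v, u) := by
  classical
  by_contra hcon
  push_neg at hcon
  obtain ⟨q', rfl⟩ : ∃ q', q = u₁ :: q' := by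
    cases q with
    | nil => simp at hq
    | cons a t => simp at hq; exact ⟨t, by rw [hq]⟩
  have hp : 0 < ℓ := hℓ.pos
  have hfreeV : ∀ (v : V) (i : ℕ), 0 < i → i < ℓ → (μ ^ i) v ≠ v := by
    intro v i h1 h2 hne
    exact hfree {v} (K.singleton_mem v) i h1 h2 (by rw [Finset.image_singleton, hne])
  -- abbreviations (as plain terms)
  -- qb := (u₁ :: q') ++ [μ u₁]
  -- decomposition of the steps of the μ-cycle
  have hdec : ∀ n : ℕ,
      stp ((List.range n).flatMap (fun i => (u₁ :: q').map ⇑(μ ^ i)) ++ [(μ ^ n) u₁])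
        = (List.range n).flatMap
            (fun i => (stp ((u₁ :: q') ++ [μ u₁])).map (Prod.map ⇑(μ ^ i) ⇑(μ ^ i))) := by
    intro n
    induction n with
    | zero => simp [stp_single]
    | succ n ih =>
      rw [List.range_succ, List.flatMap_append, List.flatMap_append]
      simp only [List.flatMap_cons, List.flatMap_nil, List.append_nil]
      rw [List.append_assoc]
      rw [stp_append_of_head ((u₁ :: q').map ⇑(μ ^ n) ++ [(μ ^ (n + 1)) u₁]) ((μ ^ n) u₁)
        (by simp)]
      rw [ih]
      congr 1
      have h1 : (u₁ :: q').map ⇑(μ ^ n) ++ [(μ ^ (n + 1)) u₁]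
          = ((u₁ :: q') ++ [μ u₁]).map ⇑(μ ^ n) := by
        have h2 : (μ ^ (n + 1)) u₁ = (μ ^ n) (μ u₁) := by rw [pow_succ]; rfl
        rw [List.map_append, List.map_singleton, h2]
      rw [h1, stp_map]
  have hZeq : stp (muMiddle μ ℓ (u₁ :: q') ++ [u₁])
      = (List.range ℓ).flatMap
          (fun i => (stp ((u₁ :: q') ++ [μ u₁])).map (Prod.map ⇑(μ ^ i) ⇑(μ ^ i))) := by
    have h := hdec ℓ
    rw [horder] at h
    simpa [muMiddle] using h
  -- swap invariance of the step multiset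
  have hbr : ∀ (a : V × V) (l : List (V × V)), List.count a l = Multiset.count a ↑l := by
    intro a l
    rw [Multiset.coe_count]
    rw [@List.count_eq_countP _ instBEqProd, @List.count_eq_countP _ instBEqOfDecidableEq]
    apply List.countP_congr
    intro b hb
    show (b == a) = true ↔ (decide (b = a)) = true
    rw [decide_eq_true_iff]
    cases a with
    | mk a1 a2 =>
      cases b with
      | mk b1 b2 =>
        show (b1 == a1 && b2 == a2) = true ↔ _
        rw [Bool.and_eq_true, Prod.mk.injEq]
        show decide (b1 = a1) = true ∧ decide (b2 = a2) = true ↔ _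
        rw [decide_eq_true_iff, decide_eq_true_iff]
  have hconM : ∀ e : V × V, e ∈ stp (muMiddle μ ℓ (u₁ :: q') ++ [u₁]) →
      Multiset.count e (↑(stp (muMiddle μ ℓ (u₁ :: q') ++ [u₁])) : Multiset (V × V))
        = Multiset.count e.swap (↑(stp (muMiddle μ ℓ (u₁ :: q') ++ [u₁])) : Multiset (V × V)) := by
    intro e he
    have h := hcon e.1 e.2 he
    rw [hbr, hbr] at h
    exact h
  have hsymM : ∀ e : V × V,
      Multiset.count e (↑(stp (muMiddle μ ℓ (u₁ :: q') ++ [u₁])) : Multiset (V × V))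
        = Multiset.count e.swap (↑(stp (muMiddle μ ℓ (u₁ :: q') ++ [u₁])) : Multiset (V × V)) := by
    intro e
    rcases em (e ∈ stp (muMiddle μ ℓ (u₁ :: q') ++ [u₁])) with he | he
    · exact hconM e he
    · rw [Multiset.count_eq_zero_of_notMem (by rwa [Multiset.mem_coe])]
      rcases em (e.swap ∈ stp (muMiddle μ ℓ (u₁ :: q') ++ [u₁])) with hs | hs
      · have h := hconM e.swap hs
        rw [show e.swap.swap = e from rfl] at h
        rw [h, Multiset.count_eq_zero_of_notMem (by rwa [Multiset.mem_coe])]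
      · rw [Multiset.count_eq_zero_of_notMem (by rwa [Multiset.mem_coe])]
  have hswapM : Multiset.map Prod.swap
        (↑(stp (muMiddle μ ℓ (u₁ :: q') ++ [u₁])) : Multiset (V × V))
      = ↑(stp (muMiddle μ ℓ (u₁ :: q') ++ [u₁])) := by
    ext e
    have h := Multiset.count_map_eq_count' Prod.swap
      (↑(stp (muMiddle μ ℓ (u₁ :: q') ++ [u₁])) : Multiset (V × V))
      Prod.swap_injective e.swap
    exact h.trans (hsymM e).symm
  -- ℓ • M₀ equation
  have hblock : ∀ i : ℕ,
      Multiset.map (phat μ ℓ hp horder)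
          (↑((stp ((u₁ :: q') ++ [μ u₁])).map (Prod.map ⇑(μ ^ i) ⇑(μ ^ i))) : Multiset (V × V))
        = ↑((stp ((u₁ :: q') ++ [μ u₁])).map (phat μ ℓ hp horder)) := by
    intro i
    rw [← Multiset.map_coe, ← Multiset.map_coe, Multiset.map_map]
    congr 1
    funext e
    exact phat_pmap μ ℓ hp horder hfreeV i e
  have hM : Multiset.map (phat μ ℓ hp horder)
        (↑(stp (muMiddle μ ℓ (u₁ :: q') ++ [u₁])) : Multiset (V × V))
      = ℓ • (↑((stp ((u₁ :: q') ++ [μ u₁])).map (phat μ ℓ hp horder))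
        : Multiset ((Quotient (muSetoid μ ℓ hp horder) × Quotient (muSetoid μ ℓ hp horder))
            × ZMod ℓ)) := by
    rw [hZeq]
    have hgen : ∀ n : ℕ,
        Multiset.map (phat μ ℓ hp horder)
            (↑((List.range n).flatMap
              (fun i => (stp ((u₁ :: q') ++ [μ u₁])).map (Prod.map ⇑(μ ^ i) ⇑(μ ^ i))))
              : Multiset (V × V))
          = n • (↑((stp ((u₁ :: q') ++ [μ u₁])).map (phat μ ℓ hp horder))
            : Multiset ((Quotient (muSetoid μ ℓ hp horder)
                × Quotient (muSetoid μ ℓ hp horder)) × ZMod ℓ)) := by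
      intro n
      induction n with
      | zero => simp
      | succ n ih =>
        rw [List.range_succ, List.flatMap_append]
        simp only [List.flatMap_cons, List.flatMap_nil, List.append_nil]
        rw [← Multiset.coe_add, Multiset.map_add, ih, hblock n, succ_nsmul]
    exact hgen ℓ
  -- reversal invariance of M₀
  have hcancel : ∀ A B : Multiset
      ((Quotient (muSetoid μ ℓ hp horder) × Quotient (muSetoid μ ℓ hp horder)) × ZMod ℓ),
      ℓ • A = ℓ • B → A = B := by
    intro A B h
    ext a
    have h2 := congrArg (Multiset.count a) h
    rw [Multiset.count_nsmul, Multiset.count_nsmul] at h2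
    exact Nat.eq_of_mul_eq_mul_left hp h2
  have hrevM0 : Multiset.map revE
        (↑((stp ((u₁ :: q') ++ [μ u₁])).map (phat μ ℓ hp horder)) : Multiset ((Quotient (muSetoid μ ℓ hp horder) × Quotient (muSetoid μ ℓ hp horder)) × ZMod ℓ))
      = ↑((stp ((u₁ :: q') ++ [μ u₁])).map (phat μ ℓ hp horder)) := by
    apply hcancel
    rw [← Multiset.map_nsmul, ← hM, Multiset.map_map]
    rw [show (revE ∘ phat μ ℓ hp horder) = phat μ ℓ hp horder ∘ Prod.swap from
      funext fun e => phat_swap μ ℓ hp horder e]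
    rw [← Multiset.map_map, hswapM, hM]
  -- total gain is 1
  have hsum : ((↑((stp ((u₁ :: q') ++ [μ u₁])).map (phat μ ℓ hp horder)) : Multiset ((Quotient (muSetoid μ ℓ hp horder) × Quotient (muSetoid μ ℓ hp horder)) × ZMod ℓ)).map
      (fun t => t.2)).sum = (1 : ZMod ℓ) := by
    rw [Multiset.map_coe, Multiset.sum_coe, List.map_map]
    rw [show ((fun t : (Quotient (muSetoid μ ℓ hp horder) ×
        Quotient (muSetoid μ ℓ hp horder)) × ZMod ℓ => t.2) ∘ phat μ ℓ hp horder)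
      = fun e : V × V => muG μ ℓ hp horder e.2 - muG μ ℓ hp horder e.1 from rfl]
    rw [show (u₁ :: q') ++ [μ u₁] = u₁ :: (q' ++ [μ u₁]) from rfl]
    rw [tele_sum (muG μ ℓ hp horder) q' u₁ (μ u₁)]
    have := muG_mu_pow μ ℓ hp horder hfreeV 1 u₁
    rw [pow_one] at this
    rw [this]
    push_cast
    ring
  -- degenerate steps are impossible when ℓ = 2
  have hfix2 : ℓ = 2 → ∀ t ∈ (↑((stp ((u₁ :: q') ++ [μ u₁])).map (phat μ ℓ hp horder))
      : Multiset ((Quotient (muSetoid μ ℓ hp horder) × Quotient (muSetoid μ ℓ hp horder)) × ZMod ℓ)), t.1.1 = t.1.2 → t.2 = 0 := by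
    intro hl2 t ht heq
    by_contra hne
    rw [Multiset.mem_coe, List.mem_map] at ht
    obtain ⟨e, he, rfl⟩ := ht
    have hmk : Quotient.mk (muSetoid μ ℓ hp horder) e.1
        = Quotient.mk (muSetoid μ ℓ hp horder) e.2 := heq
    have h1 : muG μ ℓ hp horder e.2 - muG μ ℓ hp horder e.1 = 1 :=
      zmod_ne_zero_eq_one ℓ hl2 _ hne
    have hg : muG μ ℓ hp horder e.2 = muG μ ℓ hp horder e.1 + 1 := by
      linear_combination h1
    have hstep := mu_step_eq μ ℓ hp horder hfreeV e.1 e.2 hmk hg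
    have hinf : K.inFace e.1 e.2 := mem_stp_chain' hpath.2 e he
    obtain ⟨σ, hσ, h1', h2'⟩ := hinf
    rw [hstep] at h2'
    have hτ : ({e.1, μ e.1} : Finset V) ∈ K.faces := by
      apply K.down_closed σ hσ
      · intro x hx
        rcases Finset.mem_insert.mp hx with rfl | hx'
        · exact h1'
        · rw [Finset.mem_singleton.mp hx']; exact h2'
      · exact ⟨e.1, by simp⟩
    have himg := hfree _ hτ 1 one_pos (by omega)
    apply himg
    rw [pow_one]
    have hμμ : μ (μ e.1) = e.1 := by
      have h2 : (μ ^ 2) e.1 = e.1 := by rw [← hl2, horder]; rfl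
      rw [pow_two] at h2
      exact h2
    rw [Finset.image_insert, Finset.image_singleton, hμμ, Finset.pair_comm]
  exact core_contradiction ℓ hℓ _ hrevM0 hsum hfix2
end

section
/- Let A, B be sets, M a function minion on (A, B), F a free group on a finite set, and ξ: M → Pol(ℤ, F) a minion homomorphism such that ξ(g) is a nontrivial homomorphism ℤ → F for every unary g ∈ M^{(1)}. Then for every n-ary f ∈ M there exist an element s ∈ F with s ≠ 1 and integers c₁, …, cₙ with |c₁| + ⋯ + |cₙ| ≠ 0 such that ξ(f)(x₁, …, xₙ) = s^{c₁x₁ + ⋯ + cₙxₙ} for all (x₁, …, xₙ) ∈ ℤⁿ. -/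
open Subgroup in
/-- An abelian free group is generated by a single element. -/
lemma abelian_free_exists_gen (G : Type*) [Group G] [IsFreeGroup G]
    (hab : ∀ x y : G, x * y = y * x) :
    ∃ s : G, ∀ x : G, ∃ c : ℤ, x = s ^ c := by
  classical
  have hsub : Subsingleton (IsFreeGroup.Generators G) := by
    constructor
    intro x y
    by_contra hxy
    let σ : Equiv.Perm (Fin 3) := Equiv.swap 0 1
    let τ : Equiv.Perm (Fin 3) := Equiv.swap 1 2
    let φ : G →* Equiv.Perm (Fin 3) :=
      IsFreeGroup.lift (fun z => if z = x then σ else if z = y then τ else 1)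
    have h1 : φ (IsFreeGroup.of x) = σ := by simp [φ]
    have h2 : φ (IsFreeGroup.of y) = τ := by
      simp [φ, Ne.symm hxy]
    have hc := congrArg φ (hab (IsFreeGroup.of x) (IsFreeGroup.of y))
    rw [map_mul, map_mul, h1, h2] at hc
    have : σ * τ ≠ τ * σ := by decide
    exact this hc
  set X := IsFreeGroup.Generators G
  let e : G ≃* FreeGroup X := IsFreeGroup.toFreeGroup G
  have htop : Subgroup.closure (Set.range (FreeGroup.of : X → FreeGroup X)) = ⊤ :=
    FreeGroup.closure_range_of X
  cases isEmpty_or_nonempty X with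
  | inl h =>
    refine ⟨1, fun x => ⟨0, ?_⟩⟩
    have hr : Set.range (FreeGroup.of : X → FreeGroup X) = ∅ := Set.range_eq_empty _
    rw [hr, Subgroup.closure_empty] at htop
    have : e x ∈ (⊥ : Subgroup (FreeGroup X)) := htop ▸ Subgroup.mem_top (e x)
    rw [Subgroup.mem_bot] at this
    have := congrArg e.symm this
    simpa using this
  | inr h =>
    obtain ⟨x₀⟩ := h
    refine ⟨e.symm (FreeGroup.of x₀), fun x => ?_⟩
    have hr : Set.range (FreeGroup.of : X → FreeGroup X) = {FreeGroup.of x₀} := by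
      apply Set.eq_singleton_iff_unique_mem.2
      exact ⟨⟨x₀, rfl⟩, by rintro _ ⟨z, rfl⟩; rw [Subsingleton.elim z x₀]⟩
    rw [hr, ← Subgroup.zpowers_eq_closure] at htop
    obtain ⟨c, hc⟩ := Subgroup.mem_zpowers_iff.1 (htop ▸ Subgroup.mem_top (e x))
    refine ⟨c, ?_⟩
    have := congrArg e.symm hc
    simpa using this.symm

/-- Pairwise commuting elements of a free group are powers of a common element. -/
lemma freeGroup_commuting_common_base {α : Type*} {n : ℕ} (a : Fin n → FreeGroup α)
    (hc : ∀ i j, a i * a j = a j * a i) :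
    ∃ (s : FreeGroup α) (c : Fin n → ℤ), ∀ i, a i = s ^ c i := by
  classical
  set k : Set (FreeGroup α) := Set.range a with hk
  have hcomm : ∀ x ∈ k, ∀ y ∈ k, x * y = y * x := by
    rintro _ ⟨i, rfl⟩ _ ⟨j, rfl⟩; exact hc i j
  set H : Subgroup (FreeGroup α) := Subgroup.closure k with hH
  have hab : ∀ x y : H, x * y = y * x := by
    intro x y
    have hle := Subgroup.closure_le_centralizer_centralizer k
    exact Subtype.ext <|
      Set.centralizer_centralizer_comm_of_comm hcomm _ (hle x.2) _ (hle y.2)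
  obtain ⟨s, hs⟩ := abelian_free_exists_gen H hab
  have ha : ∀ i, a i ∈ H := fun i => Subgroup.subset_closure ⟨i, rfl⟩
  choose c hcs using fun i => hs ⟨a i, ha i⟩
  refine ⟨(s : FreeGroup α), c, fun i => ?_⟩
  have := congrArg (Subtype.val : H → FreeGroup α) (hcs i)
  simpa using this

/-- let `M` be a function minion on `(A, B)`, `F` a free group on
a finite set, and `ξ : M → Pol(ℤ, F)` a minion homomorphism with `ξ(g)`
nontrivial for every unary `g ∈ M`. Then for every `n`-ary `f ∈ M` there are
`s ≠ 1` and integers `c₁, …, cₙ` with `|c₁| + ⋯ + |cₙ| ≠ 0` such that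
`ξ(f)(x₁, …, xₙ) = s ^ (c₁x₁ + ⋯ + cₙxₙ)`. -/
theorem minion_hom_to_freeGroup_form {A B : Type*} {α : Type*} [Finite α]
    (M : ∀ n : ℕ, Set ((Fin n → A) → B))
    (hMne : ∃ n f, f ∈ M n)
    (hMminor : ∀ (n n' : ℕ) (π : Fin n → Fin n') (f : (Fin n → A) → B),
        f ∈ M n → (fun x : Fin n' → A => f (fun j => x (π j))) ∈ M n')
    (ξ : ∀ n : ℕ, {f : (Fin n → A) → B // f ∈ M n} → ((Fin n → ℤ) → FreeGroup α))
    (hhom : ∀ n f, ∀ x y : Fin n → ℤ, ξ n f (x + y) = ξ n f x * ξ n f y)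
    (hminor : ∀ (n n' : ℕ) (π : Fin n → Fin n')
        (f : {f : (Fin n → A) → B // f ∈ M n})
        (g : {g : (Fin n' → A) → B // g ∈ M n'}),
        (∀ x, g.1 x = f.1 (fun j => x (π j))) →
        ∀ x, ξ n' g x = ξ n f (fun j => x (π j)))
    (hunary : ∀ g : {g : (Fin 1 → A) → B // g ∈ M 1}, ∃ x, ξ 1 g x ≠ 1) :
    ∀ (n : ℕ) (f : {f : (Fin n → A) → B // f ∈ M n}),
      ∃ (s : FreeGroup α) (c : Fin n → ℤ), s ≠ 1 ∧ (∑ i, (c i).natAbs) ≠ 0 ∧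
        ∀ x : Fin n → ℤ, ξ n f x = s ^ (∑ i, c i * x i) := by
  intro n f
  classical
  -- `φ 0 = 1`
  have hzero : ξ n f 0 = 1 := by
    have h := hhom n f 0 0
    rw [add_zero] at h
    exact (mul_left_cancel (a := ξ n f 0) (by rw [← h, mul_one])).symm
  -- images of basis vectors
  set a : Fin n → FreeGroup α := fun i => ξ n f (Pi.single i 1) with ha
  have hcomm : ∀ i j, a i * a j = a j * a i := by
    intro i j
    have h1 := hhom n f (Pi.single i 1) (Pi.single j 1)
    have h2 := hhom n f (Pi.single j 1) (Pi.single i 1)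
    rw [add_comm] at h2
    rw [← h1, ← h2]
  obtain ⟨s, c, hsc⟩ := freeGroup_commuting_common_base a hcomm
  refine ⟨s, c, ?_⟩
  -- the key formula, via an additive subgroup
  have key : ∀ x : Fin n → ℤ, ξ n f x = s ^ (∑ i, c i * x i) := by
    let S : AddSubgroup (Fin n → ℤ) :=
      { carrier := {x | ξ n f x = s ^ (∑ i, c i * x i)}
        zero_mem' := by simp [hzero]
        add_mem' := by
          intro x y hx hy
          simp only [Set.mem_setOf_eq] at hx hy ⊢
          rw [hhom n f x y, hx, hy, ← zpow_add]
          congr 1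
          rw [← Finset.sum_add_distrib]
          exact Finset.sum_congr rfl fun i _ => by simp [mul_add]
        neg_mem' := by
          intro x hx
          simp only [Set.mem_setOf_eq] at hx ⊢
          have h := hhom n f x (-x)
          rw [add_neg_cancel, hzero] at h
          have : ξ n f (-x) = (ξ n f x)⁻¹ :=
            eq_inv_of_mul_eq_one_left
              (by rw [← hhom n f (-x) x, neg_add_cancel, hzero])
          rw [this, hx, ← zpow_neg]
          congr 1
          rw [← Finset.sum_neg_distrib]
          exact Finset.sum_congr rfl fun i _ => by simp }
    have hsingle : ∀ i, (Pi.single i 1 : Fin n → ℤ) ∈ S := by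
      intro i
      show ξ n f (Pi.single i 1 : Fin n → ℤ)
          = s ^ (∑ j, c j * (Pi.single i 1 : Fin n → ℤ) j)
      have hsum : (∑ j, c j * (Pi.single i 1 : Fin n → ℤ) j) = c i := by
        rw [Finset.sum_eq_single i]
        · simp
        · intro j _ hj; simp [Pi.single_apply, hj]
        · simp
      rw [hsum]
      exact hsc i
    intro x
    have hx : x ∈ S := by
      have hrepr : x = ∑ i, Pi.single i (x i) := (Finset.univ_sum_single x).symm
      rw [hrepr]
      refine AddSubgroup.sum_mem S fun i _ => ?_
      have : (Pi.single i (x i) : Fin n → ℤ) = (x i) • (Pi.single i 1 : Fin n → ℤ) := by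
        ext j; simp [Pi.single_apply, mul_comm]
      rw [this]
      exact AddSubgroup.zsmul_mem S (hsingle i) (x i)
    exact hx
  -- nontriviality via the unary minor
  have hg : (fun x : Fin 1 → A => f.1 (fun j => x 0)) ∈ M 1 :=
    hMminor n 1 (fun _ => 0) f.1 f.2
  obtain ⟨x, hx⟩ := hunary ⟨_, hg⟩
  have hmx := hminor n 1 (fun _ => 0) f ⟨_, hg⟩ (fun _ => rfl) x
  rw [hmx, key] at hx
  have hs : s ≠ 1 := by
    intro h; rw [h, one_zpow] at hx; exact hx rfl
  have hsumc : (∑ i, c i * x 0) ≠ 0 := by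
    intro h; rw [h, zpow_zero] at hx; exact hx rfl
  refine ⟨hs, ?_, key⟩
  intro habs
  apply hsumc
  refine Finset.sum_eq_zero fun i _ => ?_
  have : (c i).natAbs = 0 :=
    Finset.sum_eq_zero_iff.mp habs i (Finset.mem_univ i)
  rw [Int.natAbs_eq_zero] at this
  rw [this, zero_mul]
end

section
/- Let k ≥ 3 and t ≥ k³ be integers, and let K_k and K_t be the complete graphs on k and t vertices viewed as relational structures with the single binary relation {(a, b) : a ≠ b}. Then for every nontrivial group G, every minion homomorphism ξ: Pol(K_k, K_t) → Pol(ℤ, G), and every f ∈ Pol(K_k, K_t), the group homomorphism ξ(f) is constant (i.e., trivial). -/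
/-- `f : [k]ⁿ → [t]` is a polymorphism of the pair of complete graphs
`(K_k, K_t)` (with the binary disequality relation): it maps tuples that are
coordinatewise distinct to distinct values. -/
def IsCliquePoly (k t : ℕ) {n : ℕ} (f : (Fin n → Fin k) → Fin t) : Prop :=
  ∀ x y : Fin n → Fin k, (∀ j, x j ≠ y j) → f x ≠ f y

/-!
Every coordinate vector `eᵢ ∈ ℤⁿ` is `(1, 0) ∘ π` for the projection `π` identifying all
coordinates other than `i`, so it suffices that `ξ(b)(1, 0) = 1` for binary `b`.
Put `b'(x, y) = b(y, y)`, a minor of `b` with `ξ(b')(1, 0) = ξ(b)(0, 0) = 1`, and pick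
fresh values `J(c, y)` outside the image of `b` (room for them needs `t ≥ 2k²`).
Let `bₘ` send every `(x, y)` with `y - x ∈ {m, …, k - 1}` (mod `k`) to `J(y - x, y)` and
agree with `b` elsewhere. Then `b₁` only sees the diagonal of `b`, so `b₁ = b'₁`, while
`b_k = b` and `b'_k = b'`.
To pass from `m` to `m + 1` use the gadget `H(v) = J(v₂ - v₃, v₂)` if `v₂ - v₃ = m`,
`H(v) = bₘ₊₁(v₀, v₁)` otherwise: it has the minors `bₘ(x, y) = H(x, y, y, x)` and
`bₘ₊₁(x, y) = H(x, y, z, z)`, and its minor `H(x, x, y, z)` only sees the diagonal of `b`.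
As `ξ(H)` is a homomorphism on `ℤ⁴`, its values on `e₀ + e₃`, `e₁ + e₂`, `e₂`, `e₃` determine
those on `e₀`, `e₁`, which carries `ξ(bₘ) = ξ(b'ₘ)` over to `ξ(bₘ₊₁) = ξ(b'ₘ₊₁)`;
induction on `m` gives `ξ(b) = ξ(b')`.
-/

theorem Fintype.exists_embedding_forall_ne_of_card_add_le {α β γ : Type*} [Fintype α]
    [Fintype β] [Fintype γ] (f : β → γ) (h : Fintype.card α + Fintype.card β ≤ Fintype.card γ) :
    ∃ J : α ↪ γ, ∀ b a, f b ≠ J a := by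
  classical
  have hcard : Fintype.card α ≤ Fintype.card {c // c ∉ Set.range f} := by
    have := Fintype.card_le_of_surjective (fun b => (⟨f b, b, rfl⟩ : {c // c ∈ Set.range f}))
      (by rintro ⟨_, b, rfl⟩; exact ⟨b, rfl⟩)
    rw [Fintype.card_subtype_compl]
    omega
  obtain ⟨e⟩ := Function.Embedding.nonempty_of_card_le hcard
  exact ⟨e.trans (Function.Embedding.subtype _), fun b a hab => (e a).2 ⟨b, hab⟩⟩

theorem eq_of_map_add_of_map_single {ι G : Type*} [Finite ι] [DecidableEq ι] [Group G]
    {φ ψ : (ι → ℤ) → G} (hφ : ∀ x y, φ (x + y) = φ x * φ y) (hψ : ∀ x y, ψ (x + y) = ψ x * ψ y)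
    (h : ∀ i, φ (Pi.single i 1) = ψ (Pi.single i 1)) : φ = ψ := by
  let Φ : (ι → ℤ) →+ Additive G := AddMonoidHom.mk' (fun x => .ofMul (φ x)) hφ
  let Ψ : (ι → ℤ) →+ Additive G := AddMonoidHom.mk' (fun x => .ofMul (ψ x)) hψ
  funext x
  show Φ x = Ψ x
  induction x using Pi.single_induction with
  | zero => simp only [map_zero]
  | add x y hx hy => simp only [map_add, hx, hy]
  | single i m =>
    have : Φ.comp (AddMonoidHom.single _ i) = Ψ.comp (AddMonoidHom.single _ i) :=
      AddMonoidHom.ext_int (h i)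
    exact DFunLike.congr_fun this m

theorem IsCliquePoly.ite {k t n : ℕ} {P : (Fin n → Fin k) → Prop} [DecidablePred P]
    {j g : (Fin n → Fin k) → Fin t} (hg : IsCliquePoly k t g) (i : Fin n)
    (hj : ∀ x y, j x = j y → x i = y i) (hjg : ∀ x y, P x → ¬P y → j x ≠ g y) :
    IsCliquePoly k t fun v => if P v then j v else g v := by
  intro x y hxy
  by_cases hx : P x <;> by_cases hy : P y <;> simp only [hx, hy, if_true, if_false]
  · exact fun h => hxy i (hj x y h)
  · exact hjg x y hx hy
  · exact (hjg y x hy hx).symm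
  · exact hg x y hxy

abbrev CliquePol (k t n : ℕ) := {f : (Fin n → Fin k) → Fin t // IsCliquePoly k t f}

namespace CliquePol

variable {k t : ℕ}

def minor {n m : ℕ} (f : CliquePol k t n) (π : Fin n → Fin m) : CliquePol k t m :=
  ⟨fun x => f.1 (x ∘ π), fun _ _ h => f.2 _ _ fun j => h (π j)⟩

variable (J : Fin k × Fin k ↪ Fin t)

def freshen (b : CliquePol k t 2) (hb : ∀ v p, b.1 v ≠ J p) (m : ℕ) : CliquePol k t 2 :=
  ⟨fun v => if m ≤ (v 1 - v 0).val then J (v 1 - v 0, v 1) else b.1 v,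
    b.2.ite 1 (fun _ _ h => (Prod.ext_iff.1 (J.injective h)).2) fun _ y _ _ => (hb y _).symm⟩

theorem freshen_apply_ne {b : CliquePol k t 2} (hb : ∀ v p, b.1 v ≠ J p) {m : ℕ}
    (w : Fin 2 → Fin k) {p : Fin k × Fin k} (hp : p.1.val < m) :
    (b.freshen J hb m).1 w ≠ J p := by
  simp only [freshen]
  split_ifs with h
  · intro he
    rw [← congrArg Prod.fst (J.injective he)] at hp
    exact absurd h (not_le.2 hp)
  · exact hb w p

def freshenGadget (b : CliquePol k t 2) (hb : ∀ v p, b.1 v ≠ J p) (m : ℕ) : CliquePol k t 4 :=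
  ⟨fun v => if (v 2 - v 3).val = m then J (v 2 - v 3, v 2)
      else ((b.freshen J hb (m + 1)).minor ![0, 1]).1 v,
    ((b.freshen J hb (m + 1)).minor ![0, 1]).2.ite 2
      (fun _ _ h => (Prod.ext_iff.1 (J.injective h)).2)
      fun _ _ hx _ => (freshen_apply_ne J hb _ (by dsimp only; omega)).symm⟩

variable {b b' : CliquePol k t 2} (hb : ∀ v p, b.1 v ≠ J p) (hb' : ∀ v p, b'.1 v ≠ J p)

theorem freshen_apply_of_eq [NeZero k] {m : ℕ} (hm : m ≠ 0) {w : Fin 2 → Fin k}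
    (hw : w 0 = w 1) : (b.freshen J hb m).1 w = b.1 w := by
  simp only [freshen, hw, sub_self, Fin.val_zero]
  exact if_neg (by omega)

theorem freshen_of_le {m : ℕ} (hm : k ≤ m) : b.freshen J hb m = b :=
  Subtype.ext <| funext fun v => if_neg (by have := (v 1 - v 0).isLt; omega)

theorem freshen_one_eq [NeZero k] (hdiag : ∀ v, v 0 = v 1 → b.1 v = b'.1 v) :
    b.freshen J hb 1 = b'.freshen J hb' 1 := by
  refine Subtype.ext <| funext fun v => ?_
  simp only [freshen]
  split_ifs with h
  · rfl
  · refine hdiag v (sub_eq_zero.1 (Fin.ext ?_)).symm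
    simpa using h

theorem freshen_eq_freshenGadget_comp (m : ℕ) (v : Fin 2 → Fin k) :
    (b.freshen J hb m).1 v = (b.freshenGadget J hb m).1 (v ∘ ![0, 1, 1, 0]) := by
  simp only [freshenGadget, minor, freshen, Function.comp_assoc,
    show (![0, 1, 1, 0] : Fin 4 → Fin 2) ∘ ![0, 1] = id by decide, Function.comp_id,
    Function.comp_apply, Matrix.cons_val]
  split_ifs <;> first | rfl | omega

theorem freshen_succ_comp_eq_freshenGadget_comp [NeZero k] {m : ℕ} (hm : m ≠ 0)
    (v : Fin 3 → Fin k) :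
    (b.freshen J hb (m + 1)).1 (v ∘ ![0, 1]) = (b.freshenGadget J hb m).1 (v ∘ ![0, 1, 2, 2]) := by
  have hcond : ¬((v ∘ ![0, 1, 2, 2]) 2 - (v ∘ ![0, 1, 2, 2]) 3).val = m := by
    simpa [Function.comp] using Ne.symm hm
  simp only [freshenGadget, minor, if_neg hcond, Function.comp_assoc]
  rw [show (![0, 1, 2, 2] : Fin 4 → Fin 3) ∘ ![0, 1] = ![0, 1] by decide]

theorem freshenGadget_comp_diag_eq [NeZero k] (hdiag : ∀ v, v 0 = v 1 → b.1 v = b'.1 v)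
    (m : ℕ) (v : Fin 3 → Fin k) :
    (b.freshenGadget J hb m).1 (v ∘ ![0, 0, 1, 2]) =
      (b'.freshenGadget J hb' m).1 (v ∘ ![0, 0, 1, 2]) := by
  simp only [freshenGadget, minor]
  split_ifs
  · rfl
  · rw [freshen_apply_of_eq J hb (Nat.succ_ne_zero m) rfl,
      freshen_apply_of_eq J hb' (Nat.succ_ne_zero m) rfl]
    exact hdiag _ rfl

end CliquePol

structure IsMinionHom {k t : ℕ} {G : Type*} [Group G]
    (ξ : ∀ n, CliquePol k t n → (Fin n → ℤ) → G) : Prop where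
  map_add : ∀ n f (x y : Fin n → ℤ), ξ n f (x + y) = ξ n f x * ξ n f y
  map_minor : ∀ (n n' : ℕ) (π : Fin n → Fin n') (f : CliquePol k t n) (g : CliquePol k t n'),
    (∀ x, g.1 x = f.1 (fun j => x (π j))) → ∀ x, ξ n' g x = ξ n f (fun j => x (π j))

namespace IsMinionHom

open CliquePol

variable {k t : ℕ} {G : Type*} [Group G] {ξ : ∀ n, CliquePol k t n → (Fin n → ℤ) → G}

theorem map_zero (hξ : IsMinionHom ξ) {n : ℕ} (f : CliquePol k t n) : ξ n f 0 = 1 :=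
  left_eq_mul.1 (by simpa only [add_zero] using hξ.map_add n f 0 0)

theorem map_minor_apply (hξ : IsMinionHom ξ) {n m : ℕ} (f : CliquePol k t n) (π : Fin n → Fin m)
    (x : Fin m → ℤ) : ξ m (f.minor π) x = ξ n f (x ∘ π) :=
  hξ.map_minor n m π f _ (fun _ => rfl) x

theorem map_eq_of_common_minor (hξ : IsMinionHom ξ) {n n' m : ℕ} {f : CliquePol k t n}
    {f' : CliquePol k t n'} {π : Fin n → Fin m} {π' : Fin n' → Fin m}
    (h : ∀ v, f.1 (v ∘ π) = f'.1 (v ∘ π')) (x : Fin m → ℤ) {y : Fin n → ℤ} {y' : Fin n' → ℤ}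
    (hy : x ∘ π = y) (hy' : x ∘ π' = y') : ξ n f y = ξ n' f' y' := by
  rw [← hy, ← hy', ← hξ.map_minor_apply, ← hξ.map_minor_apply,
    Subtype.ext (funext h : (f.minor π).1 = (f'.minor π').1)]

theorem eq_of_map_vec_two (hξ : IsMinionHom ξ) {f g : CliquePol k t 2}
    (h₀ : ξ 2 f ![1, 0] = ξ 2 g ![1, 0]) (h₁ : ξ 2 f ![0, 1] = ξ 2 g ![0, 1]) : ξ 2 f = ξ 2 g :=
  eq_of_map_add_of_map_single (hξ.map_add 2 f) (hξ.map_add 2 g) <| Fin.forall_fin_two.2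
    ⟨by rwa [show (Pi.single 0 1 : Fin 2 → ℤ) = ![1, 0] by decide],
      by rwa [show (Pi.single 1 1 : Fin 2 → ℤ) = ![0, 1] by decide]⟩

section Freshen

variable (J : Fin k × Fin k ↪ Fin t) {b b' : CliquePol k t 2} (hb : ∀ v p, b.1 v ≠ J p)
  (hb' : ∀ v p, b'.1 v ≠ J p)

theorem map_freshen_succ [NeZero k] (hξ : IsMinionHom ξ)
    (hdiag : ∀ v, v 0 = v 1 → b.1 v = b'.1 v) {m : ℕ} (hm : m ≠ 0)
    (h : ξ 2 (b.freshen J hb m) = ξ 2 (b'.freshen J hb' m)) :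
    ξ 2 (b.freshen J hb (m + 1)) = ξ 2 (b'.freshen J hb' (m + 1)) := by
  set H := b.freshenGadget J hb m
  set H' := b'.freshenGadget J hb' m
  have hH (x y) : ξ 4 H (x + y) = ξ 4 H x * ξ 4 H y := hξ.map_add 4 H x y
  have hH' (x y) : ξ 4 H' (x + y) = ξ 4 H' x * ξ 4 H' y := hξ.map_add 4 H' x y
  have hdiagH := freshenGadget_comp_diag_eq J hb hb' hdiag m
  have e₂ : ξ 4 H ![0, 0, 1, 0] = ξ 4 H' ![0, 0, 1, 0] :=
    hξ.map_eq_of_common_minor hdiagH ![0, 1, 0] (by decide) (by decide)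
  have e₃ : ξ 4 H ![0, 0, 0, 1] = ξ 4 H' ![0, 0, 0, 1] :=
    hξ.map_eq_of_common_minor hdiagH ![0, 0, 1] (by decide) (by decide)
  have hfreshen (x : Fin 2 → ℤ) {y : Fin 4 → ℤ} (hy : x ∘ ![0, 1, 1, 0] = y) :
      ξ 4 H y = ξ 4 H' y :=
    calc ξ 4 H y = ξ 2 (b.freshen J hb m) x := (hξ.map_eq_of_common_minor (π := id)
          (freshen_eq_freshenGadget_comp J hb m) x rfl hy).symm
      _ = ξ 2 (b'.freshen J hb' m) x := congrFun h x
      _ = ξ 4 H' y := hξ.map_eq_of_common_minor (π := id)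
          (freshen_eq_freshenGadget_comp J hb' m) x rfl hy
  have e₀ : ξ 4 H ![1, 0, 0, 0] = ξ 4 H' ![1, 0, 0, 0] := by
    have := hfreshen ![1, 0] (y := ![1, 0, 0, 0] + ![0, 0, 0, 1]) (by decide)
    rwa [hH, hH', e₃, mul_left_inj] at this
  have e₁ : ξ 4 H ![0, 1, 0, 0] = ξ 4 H' ![0, 1, 0, 0] := by
    have := hfreshen ![0, 1] (y := ![0, 1, 0, 0] + ![0, 0, 1, 0]) (by decide)
    rwa [hH, hH', e₂, mul_left_inj] at this
  have hsucc := freshen_succ_comp_eq_freshenGadget_comp J hb hm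
  have hsucc' := freshen_succ_comp_eq_freshenGadget_comp J hb' hm
  refine hξ.eq_of_map_vec_two ?_ ?_
  · calc ξ 2 (b.freshen J hb (m + 1)) ![1, 0] = ξ 4 H ![1, 0, 0, 0] :=
          hξ.map_eq_of_common_minor hsucc ![1, 0, 0] (by decide) (by decide)
      _ = ξ 4 H' ![1, 0, 0, 0] := e₀
      _ = _ := (hξ.map_eq_of_common_minor hsucc' ![1, 0, 0] (by decide) (by decide)).symm
  · calc ξ 2 (b.freshen J hb (m + 1)) ![0, 1] = ξ 4 H ![0, 1, 0, 0] :=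
          hξ.map_eq_of_common_minor hsucc ![0, 1, 0] (by decide) (by decide)
      _ = ξ 4 H' ![0, 1, 0, 0] := e₁
      _ = _ := (hξ.map_eq_of_common_minor hsucc' ![0, 1, 0] (by decide) (by decide)).symm

end Freshen

theorem map_eq_of_eqOn_diag [NeZero k] (hξ : IsMinionHom ξ) (J : Fin k × Fin k ↪ Fin t)
    {b b' : CliquePol k t 2} (hb : ∀ v p, b.1 v ≠ J p) (hb' : ∀ v p, b'.1 v ≠ J p)
    (hdiag : ∀ v, v 0 = v 1 → b.1 v = b'.1 v) : ξ 2 b = ξ 2 b' := by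
  have key : ∀ m, 1 ≤ m → ξ 2 (b.freshen J hb m) = ξ 2 (b'.freshen J hb' m) := by
    intro m hm
    induction m, hm using Nat.le_induction with
    | base => rw [freshen_one_eq J hb hb' hdiag]
    | succ m hm ih => exact hξ.map_freshen_succ J hb hb' hdiag (by omega) ih
  simpa only [freshen_of_le J _ le_rfl] using key k NeZero.one_le

theorem map_vec_one_zero_eq_one [NeZero k] (hξ : IsMinionHom ξ) (ht : 2 * k ^ 2 ≤ t)
    (b : CliquePol k t 2) : ξ 2 b ![1, 0] = 1 := by
  obtain ⟨J, hb⟩ := Fintype.exists_embedding_forall_ne_of_card_add_le (α := Fin k × Fin k) b.1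
    (by simp only [Fintype.card_prod, Fintype.card_fun, Fintype.card_fin]; nlinarith)
  have hdiag (v : Fin 2 → Fin k) (hv : v 0 = v 1) : b.1 v = (b.minor fun _ => 1).1 v :=
    congrArg b.1 <| funext <| Fin.forall_fin_two.2 ⟨hv, rfl⟩
  rw [hξ.map_eq_of_eqOn_diag J (b' := b.minor fun _ => 1) hb (fun _ _ => hb _ _) hdiag,
    hξ.map_minor_apply, show ![(1 : ℤ), 0] ∘ (fun _ : Fin 2 => (1 : Fin 2)) = 0 by decide,
    hξ.map_zero]

theorem map_eq_one [NeZero k] (hξ : IsMinionHom ξ) (ht : 2 * k ^ 2 ≤ t) {n : ℕ}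
    (f : CliquePol k t n) (x : Fin n → ℤ) : ξ n f x = 1 := by
  classical
  refine congrFun (eq_of_map_add_of_map_single (ψ := fun _ => 1) (hξ.map_add n f)
    (fun _ _ => (mul_one 1).symm) fun i => ?_) x
  have hi : ![(1 : ℤ), 0] ∘ (fun j => if j = i then 0 else 1) = Pi.single i 1 := by
    funext j
    by_cases hj : j = i <;> simp [hj]
  rw [← hi, ← hξ.map_minor_apply, hξ.map_vec_one_zero_eq_one ht]

end IsMinionHom

theorem no_nontrivial_minion_hom_for_AGCP_general (k t : ℕ) (hk : 3 ≤ k) (ht : k ^ 3 ≤ t)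
    {G : Type*} [Group G]
    (ξ : ∀ n : ℕ, {f : (Fin n → Fin k) → Fin t // IsCliquePoly k t f} →
        ((Fin n → ℤ) → G))
    (hhom : ∀ n f, ∀ x y : Fin n → ℤ, ξ n f (x + y) = ξ n f x * ξ n f y)
    (hminor : ∀ (n n' : ℕ) (π : Fin n → Fin n')
        (f : {f : (Fin n → Fin k) → Fin t // IsCliquePoly k t f})
        (g : {g : (Fin n' → Fin k) → Fin t // IsCliquePoly k t g}),
        (∀ x, g.1 x = f.1 (fun j => x (π j))) →
        ∀ x, ξ n' g x = ξ n f (fun j => x (π j))) :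
    ∀ (n : ℕ) (f : {f : (Fin n → Fin k) → Fin t // IsCliquePoly k t f})
      (x : Fin n → ℤ), ξ n f x = 1 := by
  have : NeZero k := ⟨by omega⟩
  have ht' : 2 * k ^ 2 ≤ t := by nlinarith [pow_succ k 2]
  exact fun n f x => IsMinionHom.map_eq_one ⟨hhom, hminor⟩ ht' f x

/-- for `k ≥ 3`, `t ≥ k³`, any nontrivial group `G` and any minion
homomorphism `ξ : Pol(K_k, K_t) → Pol(ℤ, G)`, the image `ξ(f)` of every
polymorphism is the constant (trivial) homomorphism. -/
theorem no_nontrivial_minion_hom_for_AGCP (k t : ℕ) (hk : 3 ≤ k) (ht : k ^ 3 ≤ t)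
    {G : Type*} [Group G] [Nontrivial G]
    (ξ : ∀ n : ℕ, {f : (Fin n → Fin k) → Fin t // IsCliquePoly k t f} →
        ((Fin n → ℤ) → G))
    (hhom : ∀ n f, ∀ x y : Fin n → ℤ, ξ n f (x + y) = ξ n f x * ξ n f y)
    (hminor : ∀ (n n' : ℕ) (π : Fin n → Fin n')
        (f : {f : (Fin n → Fin k) → Fin t // IsCliquePoly k t f})
        (g : {g : (Fin n' → Fin k) → Fin t // IsCliquePoly k t g}),
        (∀ x, g.1 x = f.1 (fun j => x (π j))) →
        ∀ x, ξ n' g x = ξ n f (fun j => x (π j))) :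
    ∀ (n : ℕ) (f : {f : (Fin n → Fin k) → Fin t // IsCliquePoly k t f})
      (x : Fin n → ℤ), ξ n f x = 1 :=
  no_nontrivial_minion_hom_for_AGCP_general k t hk ht ξ hhom hminor
end

section
/- Let k ≥ 3 and t ≥ k³ be integers, G a group, and ξ: Pol(K_k, K_t) → Pol(ℤ, G) a minion homomorphism. Let f, g ∈ Pol(K_k, K_t) be polymorphisms of the same arity n ≥ 3 that are of the same type (i.e., f(x, …, x) = g(x, …, x) for all x ∈ [k]) and that differ in exactly one point, i.e., there is exactly one tuple (a₁, …, aₙ) ∈ [k]ⁿ with f(a₁, …, aₙ) ≠ g(a₁, …, aₙ). Then ξ(f) = ξ(g). -/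
-- `z ∘ copyLast c = (z, z c)` and `z ∘ copyPenult c = (z₀, …, z_{m-1}, z_c, z_m)`.
def copyLast {m : ℕ} (c : Fin m) : Fin (m + 1) → Fin m :=
  Fin.snoc (α := fun _ => Fin m) id c

def copyPenult {m : ℕ} (c : Fin m) : Fin (m + 2) → Fin (m + 1) :=
  Fin.snoc (α := fun _ => Fin (m + 1))
    (Fin.snoc (α := fun _ => Fin (m + 1)) Fin.castSucc c.castSucc) (Fin.last m)

@[simp]
theorem copyLast_castSucc {m : ℕ} (c i : Fin m) : copyLast c i.castSucc = i := by
  simp [copyLast]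

@[simp]
theorem copyLast_last {m : ℕ} (c : Fin m) : copyLast c (Fin.last m) = c := by
  simp [copyLast]

theorem map_zsmul_add_of_map_eq_one {A G : Type*} [AddGroup A] [Group G] {φ : A → G}
    (hφ : ∀ x y, φ (x + y) = φ x * φ y) {e : A} (he : φ e = 1) (c : ℤ) (v : A) :
    φ (c • e + v) = φ v := by
  let ψ : Multiplicative A →* G := MonoidHom.mk' (fun a => φ a.toAdd) fun a b => hφ a.toAdd b.toAdd
  have hce : φ (c • e) = 1 := by simpa [ψ, he] using map_zpow ψ (Multiplicative.ofAdd e) c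
  rw [hφ, hce, one_mul]

section IntegerTuples

variable {G : Type*} [Group G] {n : ℕ}

theorem map_single_last_eq_one {φ : (Fin (n + 1) → ℤ) → G} {ψ : (Fin (n + 2) → ℤ) → G}
    (hψ : ∀ x y, ψ (x + y) = ψ x * ψ y) (p : Fin n)
    (hlast : ∀ z, φ z = ψ (z ∘ copyLast (Fin.last n)))
    (hp : ∀ z, φ z = ψ (z ∘ copyLast p.castSucc))
    (hp' : ∀ z, φ z = ψ (z ∘ copyPenult p)) :
    φ (Pi.single (Fin.last n) 1) = 1 := by
  set e : Fin (n + 1) → ℤ := Pi.single (Fin.last n) 1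
  have hsplit : e ∘ copyLast (Fin.last n) = e ∘ copyLast p.castSucc + e ∘ copyPenult p := by
    funext j
    induction j using Fin.lastCases with
    | last => simp [e, copyPenult, (Fin.castSucc_lt_last p).ne]
    | cast i =>
      induction i using Fin.lastCases with
      | last => simp [e, copyPenult, (Fin.castSucc_lt_last p).ne]
      | cast i => simp [e, copyPenult, (Fin.castSucc_lt_last i).ne]
  have hsq : φ e = φ e * φ e := calc
    φ e = ψ (e ∘ copyLast (Fin.last n)) := hlast e
    _ = ψ (e ∘ copyLast p.castSucc) * ψ (e ∘ copyPenult p) := by rw [hsplit, hψ]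
    _ = φ e * φ e := by rw [← hp, ← hp']
  exact left_eq_mul.mp hsq

theorem map_eq_of_comp_castSucc_eq {φ : (Fin (n + 1) → ℤ) → G}
    (hφ : ∀ x y, φ (x + y) = φ x * φ y) (he : φ (Pi.single (Fin.last n) 1) = 1)
    {u v : Fin (n + 1) → ℤ} (huv : u ∘ Fin.castSucc = v ∘ Fin.castSucc) : φ u = φ v := by
  have hu : u = (u (Fin.last n) - v (Fin.last n)) • Pi.single (Fin.last n) 1 + v := by
    funext j
    induction j using Fin.lastCases with
    | last => simp
    | cast i => simpa [(Fin.castSucc_lt_last i).ne] using congrFun huv i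
  rw [hu, map_zsmul_add_of_map_eq_one hφ he]

end IntegerTuples

section Patch

variable {k t n N N' : ℕ} {f g : (Fin n → Fin k) → Fin t} {a : Fin n → Fin k}

def patch (f g : (Fin n → Fin k) → Fin t) (a : Fin n → Fin k) (r : Fin n → Fin N)
    (c : (Fin N → Fin k) → Prop) [DecidablePred c] (x : Fin N → Fin k) : Fin t :=
  if x ∘ r = a then (if c x then f a else g a) else f (x ∘ r)

theorem isCliquePoly_patch (hf : IsCliquePoly k t f) (hg : IsCliquePoly k t g) (hn : 0 < n)
    (hfg : ∀ b ≠ a, f b = g b) (r : Fin n → Fin N) (c : (Fin N → Fin k) → Prop)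
    [DecidablePred c] : IsCliquePoly k t (patch f g a r c) := by
  have hmixed : ∀ x y : Fin N → Fin k, (∀ j, x j ≠ y j) → x ∘ r = a → y ∘ r ≠ a →
      patch f g a r c x ≠ patch f g a r c y := by
    intro x y hxy hx hy
    have hdisj : ∀ i, a i ≠ (y ∘ r) i := fun i => hx ▸ hxy (r i)
    have hya : y ∘ r ≠ a := fun h => hdisj ⟨0, hn⟩ (by rw [h])
    simp only [patch, if_pos hx, if_neg hy]
    split_ifs
    · exact hf a _ hdisj
    · rw [hfg _ hya]; exact hg a _ hdisj
  intro x y hxy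
  by_cases hx : x ∘ r = a <;> by_cases hy : y ∘ r = a
  · exact absurd (congrFun (hx.trans hy.symm) ⟨0, hn⟩) (hxy _)
  · exact hmixed x y hxy hx hy
  · exact (hmixed y x (fun j => (hxy j).symm) hy hx).symm
  · simp only [patch, if_neg hx, if_neg hy]
    exact hf _ _ fun i => hxy (r i)

theorem patch_id_true : patch f g a id (fun _ => True) = f := by
  funext x
  by_cases hx : x = a <;> simp [patch, hx]

theorem patch_id_false (hfg : ∀ b ≠ a, f b = g b) : patch f g a id (fun _ => False) = g := by
  funext x
  by_cases hx : x = a <;> simp [patch, hx, hfg]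

theorem patch_comp {r : Fin n → Fin N} {r' : Fin n → Fin N'} {c : (Fin N → Fin k) → Prop}
    {c' : (Fin N' → Fin k) → Prop} [DecidablePred c] [DecidablePred c'] (ρ : Fin N' → Fin N)
    (hr : ρ ∘ r' = r) (hc : ∀ z, z ∘ r = a → (c' (z ∘ ρ) ↔ c z)) (z : Fin N → Fin k) :
    patch f g a r' c' (z ∘ ρ) = patch f g a r c z := by
  have hzr : (z ∘ ρ) ∘ r' = z ∘ r := by rw [Function.comp_assoc, hr]
  by_cases hz : z ∘ r = a
  · simp only [patch, hzr, if_pos hz, hc z hz]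
  · simp only [patch, hzr, if_neg hz]

end Patch

section Extensions

variable {k t n : ℕ} {f g : (Fin n → Fin k) → Fin t} {a : Fin n → Fin k} {p : Fin n}

def extend₁ (f g : (Fin n → Fin k) → Fin t) (a : Fin n → Fin k) (p : Fin n) :
    (Fin (n + 1) → Fin k) → Fin t :=
  patch f g a Fin.castSucc fun z => z (Fin.last n) = a p

def extend₂ (f g : (Fin n → Fin k) → Fin t) (a : Fin n → Fin k) (p : Fin n) :
    (Fin (n + 2) → Fin k) → Fin t :=
  patch f g a (Fin.castSucc ∘ Fin.castSucc) fun z =>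
    z (Fin.last n).castSucc = a p ∧ z (Fin.last (n + 1)) = a p

theorem extend₁_comp_copyLast_self (x : Fin n → Fin k) :
    extend₁ f g a p (x ∘ copyLast p) = f x := by
  rw [extend₁, patch_comp (copyLast p) (by ext; simp) (r := id) (c := fun _ => True)
    (by rintro z rfl; simp), patch_id_true]

theorem extend₁_comp_copyLast_of_ne (hfg : ∀ b ≠ a, f b = g b) {q : Fin n} (hpq : a p ≠ a q)
    (x : Fin n → Fin k) : extend₁ f g a p (x ∘ copyLast q) = g x := by
  rw [extend₁, patch_comp (copyLast q) (by ext; simp) (r := id) (c := fun _ => False)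
    (by rintro z rfl; simpa using hpq.symm), patch_id_false hfg]

theorem extend₂_comp_copyLast_last (z : Fin (n + 1) → Fin k) :
    extend₂ f g a p (z ∘ copyLast (Fin.last n)) = extend₁ f g a p z :=
  patch_comp _ (by ext; simp) (by simp) z

theorem extend₂_comp_copyLast_castSucc (z : Fin (n + 1) → Fin k) :
    extend₂ f g a p (z ∘ copyLast p.castSucc) = extend₁ f g a p z :=
  patch_comp _ (by ext; simp) (by rintro z rfl; simp) z

theorem extend₂_comp_copyPenult (z : Fin (n + 1) → Fin k) :
    extend₂ f g a p (z ∘ copyPenult p) = extend₁ f g a p z :=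
  patch_comp _ (by ext; simp [copyPenult]) (by rintro z rfl; simp [copyPenult]) z

end Extensions

theorem minion_hom_eq_of_differ_one_point_general (k t : ℕ)
    {G : Type*} [Group G]
    (ξ : ∀ n : ℕ, {f : (Fin n → Fin k) → Fin t // IsCliquePoly k t f} →
        ((Fin n → ℤ) → G))
    (hhom : ∀ n f, ∀ x y : Fin n → ℤ, ξ n f (x + y) = ξ n f x * ξ n f y)
    (hminor : ∀ (n n' : ℕ) (π : Fin n → Fin n')
        (f : {f : (Fin n → Fin k) → Fin t // IsCliquePoly k t f})
        (g : {g : (Fin n' → Fin k) → Fin t // IsCliquePoly k t g}),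
        (∀ x, g.1 x = f.1 (fun j => x (π j))) →
        ∀ x, ξ n' g x = ξ n f (fun j => x (π j)))
    (n : ℕ) (hn : 3 ≤ n)
    (f g : {f : (Fin n → Fin k) → Fin t // IsCliquePoly k t f})
    (htype : ∀ x : Fin k, f.1 (fun _ => x) = g.1 (fun _ => x))
    (hdiff : ∃! a : Fin n → Fin k, f.1 a ≠ g.1 a) :
    ξ n f = ξ n g := by
  obtain ⟨a, hfga, huniq⟩ := hdiff
  have hfg : ∀ b ≠ a, f.1 b = g.1 b := fun b hb => not_not.mp (mt (huniq b) hb)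
  have hn₀ : 0 < n := by omega
  obtain ⟨p, q, hpq⟩ : ∃ p q, a p ≠ a q := by
    by_contra! hconst
    exact hfga (funext (fun i => hconst i ⟨0, hn₀⟩) ▸ htype (a ⟨0, hn₀⟩))
  let F : {h : (Fin (n + 1) → Fin k) → Fin t // IsCliquePoly k t h} :=
    ⟨extend₁ f.1 g.1 a p, isCliquePoly_patch f.2 g.2 hn₀ hfg _ _⟩
  let H : {h : (Fin (n + 2) → Fin k) → Fin t // IsCliquePoly k t h} :=
    ⟨extend₂ f.1 g.1 a p, isCliquePoly_patch f.2 g.2 hn₀ hfg _ _⟩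
  have hF : ξ (n + 1) F (Pi.single (Fin.last n) 1) = 1 :=
    map_single_last_eq_one (hhom _ H) p
      (hminor _ _ _ H F fun z => extend₂_comp_copyLast_last z |>.symm)
      (hminor _ _ _ H F fun z => extend₂_comp_copyLast_castSucc z |>.symm)
      (hminor _ _ _ H F fun z => extend₂_comp_copyPenult z |>.symm)
  funext x
  rw [hminor _ _ (copyLast p) F f fun x => extend₁_comp_copyLast_self x |>.symm,
    hminor _ _ (copyLast q) F g fun x => extend₁_comp_copyLast_of_ne hfg hpq x |>.symm]
  exact map_eq_of_comp_castSucc_eq (hhom _ F) hF (by ext; simp)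

/-- for `k ≥ 3`, `t ≥ k³`, a group `G` and a minion homomorphism
`ξ : Pol(K_k, K_t) → Pol(ℤ, G)`: if `f, g` are polymorphisms of the same arity
`n ≥ 3`, of the same type (equal on constant tuples), differing in exactly one
point, then `ξ(f) = ξ(g)`. -/
theorem minion_hom_eq_of_differ_one_point (k t : ℕ) (hk : 3 ≤ k) (ht : k ^ 3 ≤ t)
    {G : Type*} [Group G]
    (ξ : ∀ n : ℕ, {f : (Fin n → Fin k) → Fin t // IsCliquePoly k t f} →
        ((Fin n → ℤ) → G))
    (hhom : ∀ n f, ∀ x y : Fin n → ℤ, ξ n f (x + y) = ξ n f x * ξ n f y)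
    (hminor : ∀ (n n' : ℕ) (π : Fin n → Fin n')
        (f : {f : (Fin n → Fin k) → Fin t // IsCliquePoly k t f})
        (g : {g : (Fin n' → Fin k) → Fin t // IsCliquePoly k t g}),
        (∀ x, g.1 x = f.1 (fun j => x (π j))) →
        ∀ x, ξ n' g x = ξ n f (fun j => x (π j)))
    (n : ℕ) (hn : 3 ≤ n)
    (f g : {f : (Fin n → Fin k) → Fin t // IsCliquePoly k t f})
    (htype : ∀ x : Fin k, f.1 (fun _ => x) = g.1 (fun _ => x))
    (hdiff : ∃! a : Fin n → Fin k, f.1 a ≠ g.1 a) :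
    ξ n f = ξ n g :=
  minion_hom_eq_of_differ_one_point_general k t ξ hhom hminor n hn f g htype hdiff
end

section
/- Let H^A, H^B be simplicial complexes, f: V(H^A)ⁿ → V(H^B) a map such that for all faces σ₁, …, σₙ of H^A the set f(σ₁, …, σₙ) = { f(t₁, …, tₙ) : t_i ∈ σ_i } is a face of H^B, and let C = t₁, …, t_k, t₁ be a cycle in G(H^A) (indices taken cyclically modulo k). Let P₁ = v, a₁⁺, …, a_s⁺ and P₂ = v, b₁⁺, …, b_s⁺ be normal f-paths starting at the same vertex v, where the sequence b₁, …, b_s is a permutation (rearrangement) of the sequence a₁, …, a_s. Then P₁ and P₂ are paths in H^B with the same endpoints, and P₁ and P₂ are homotopic in H^B. -/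
/-- The list of vertices of the normal `f`-path determined by the cycle `c`
(of length `k`, indexed cyclically), the starting argument-position tuple
`pos : Fin n → ZMod k`, and the list `a` of coordinate steps: at each step the
entry in the given coordinate advances one position along the cycle. -/
def normalPath {VA VB : Type*} {n k : ℕ} (f : (Fin n → VA) → VB)
    (c : ZMod k → VA) : (Fin n → ZMod k) → List (Fin n) → List VB
  | pos, [] => [f fun i => c (pos i)]
  | pos, j :: rest =>
      f (fun i => c (pos i)) ::
        normalPath f c (Function.update pos j (pos j + 1)) rest

/-!
Fix a position tuple `pos`. Since every edge `c i, c (i + 1)` of the cycle lies in a face of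
`H^A`, the product of these faces is mapped into one face of `H^B`; hence the `2ⁿ` vertices
`f (c ∘ (pos + δ))`, `δ ∈ {0, 1}ⁿ`, all lie in a common face. Consecutive vertices of a normal
path are of this form, so a normal path is a path. Exchanging two adjacent steps `x⁺, y⁺`
replaces `f (c ∘ (pos + eₓ))` by `f (c ∘ (pos + e_y))` between `f (c ∘ pos)` and
`f (c ∘ (pos + eₓ + e_y))`; all four lie in one face, so this is a contraction followed by an
expansion. Permutations are generated by adjacent exchanges, and the endpoint depends only on how
often each coordinate is stepped.
-/

namespace SComplex

variable {V : Type*} {K : SComplex V}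

theorem Step.cons {p q : List V} (x : V) : K.Step p q → K.Step (x :: p) (x :: q)
  | .expand l₁ l₂ a y b h => .expand (x :: l₁) l₂ a y b h

theorem Homotopic.cons {p q : List V} (x : V) (h : K.Homotopic p q) :
    K.Homotopic (x :: p) (x :: q) :=
  Relation.ReflTransGen.lift (x :: ·) (fun _ _ => Or.imp (Step.cons x) (Step.cons x)) _ _ h

theorem homotopic_cons_cons_of_face {u x y z : V} (l : List V)
    (hx : ∃ σ ∈ K.faces, u ∈ σ ∧ x ∈ σ ∧ z ∈ σ) (hy : ∃ σ ∈ K.faces, u ∈ σ ∧ y ∈ σ ∧ z ∈ σ) :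
    K.Homotopic (u :: x :: z :: l) (u :: y :: z :: l) :=
  .tail (.single (.inr (.expand [] l u x z hx))) (.inl (.expand [] l u y z hy))

end SComplex

theorem Function.update_add_eq_add_single {ι M : Type*} [DecidableEq ι] [AddZeroClass M]
    (g : ι → M) (j : ι) (a : M) : Function.update g j (g j + a) = g + Pi.single j a := by
  simpa [Pi.single, Pi.mulSingle] using Function.update_add g 0 j (g j) a

def MapsFacesIntoFaces {VA VB : Type*} {n : ℕ} (KA : SComplex VA) (KB : SComplex VB)
    (f : (Fin n → VA) → VB) : Prop :=
  ∀ σ : Fin n → Finset VA, (∀ i, σ i ∈ KA.faces) →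
    ∃ τ ∈ KB.faces, ∀ t : Fin n → VA, (∀ i, t i ∈ σ i) → f t ∈ τ

theorem MapsFacesIntoFaces.of_image_eq_face {VA VB : Type*} {n : ℕ} {KA : SComplex VA}
    {KB : SComplex VB} {f : (Fin n → VA) → VB}
    (hf : ∀ σ : Fin n → Finset VA, (∀ i, σ i ∈ KA.faces) →
        ∃ τ ∈ KB.faces, (↑τ : Set VB) =
          {b : VB | ∃ t : Fin n → VA, (∀ i, t i ∈ σ i) ∧ b = f t}) :
    MapsFacesIntoFaces KA KB f := fun σ hσ => by
  obtain ⟨τ, hτ, hτf⟩ := hf σ hσ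
  refine ⟨τ, hτ, fun t ht => ?_⟩
  rw [← Finset.mem_coe, hτf]
  exact ⟨t, ht, rfl⟩

section NormalPath

variable {VA VB : Type*} {KA : SComplex VA} {KB : SComplex VB} {n k : ℕ}
  {f : (Fin n → VA) → VB} {c : ZMod k → VA}

theorem normalPath_cons (pos : Fin n → ZMod k) (j : Fin n) (l : List (Fin n)) :
    normalPath f c pos (j :: l) =
      f (fun i => c (pos i)) :: normalPath f c (pos + Pi.single j 1) l := by
  rw [normalPath, Function.update_add_eq_add_single]

theorem normalPath_eq_cons (pos : Fin n → ZMod k) (l : List (Fin n)) :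
    ∃ tail, normalPath f c pos l = f (fun i => c (pos i)) :: tail := by
  cases l <;> exact ⟨_, rfl⟩

theorem normalPath_ne_nil (pos : Fin n → ZMod k) (l : List (Fin n)) :
    normalPath f c pos l ≠ [] := by
  obtain ⟨tail, h⟩ := normalPath_eq_cons (f := f) (c := c) pos l
  simp [h]

theorem normalPath_head? (pos : Fin n → ZMod k) (l : List (Fin n)) :
    (normalPath f c pos l).head? = some (f fun i => c (pos i)) := by
  obtain ⟨tail, h⟩ := normalPath_eq_cons (f := f) (c := c) pos l
  simp [h]

theorem normalPath_getLast? (pos : Fin n → ZMod k) (l : List (Fin n)) :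
    (normalPath f c pos l).getLast? = some (f fun i => c (pos i + l.count i)) := by
  induction l generalizing pos with
  | nil => simp [normalPath]
  | cons j l ih =>
    obtain ⟨tail, h⟩ := normalPath_eq_cons (f := f) (c := c) (pos + Pi.single j 1) l
    rw [normalPath_cons, h, List.getLast?_cons_cons, ← h, ih]
    congr 2
    funext i
    rcases eq_or_ne i j with rfl | hij
    · simp only [Pi.add_apply, Pi.single_eq_same, List.count_cons_self, Nat.cast_succ]
      rw [add_right_comm, add_assoc]
    · simp [hij.symm]

theorem exists_face_forall_add_mem (hf : MapsFacesIntoFaces KA KB f)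
    (hc : ∀ i : ZMod k, KA.inFace (c i) (c (i + 1))) (pos : Fin n → ZMod k) :
    ∃ τ ∈ KB.faces, ∀ δ : Fin n → ZMod k, (∀ i, δ i = 0 ∨ δ i = 1) →
      f (fun i => c ((pos + δ) i)) ∈ τ := by
  choose σ hσ hmem₀ hmem₁ using hc
  obtain ⟨τ, hτ, hfτ⟩ := hf (fun i => σ (pos i)) (fun i => hσ (pos i))
  refine ⟨τ, hτ, fun δ hδ => hfτ _ fun i => ?_⟩
  rcases hδ i with h | h <;> simp [h, hmem₀, hmem₁]

theorem normalPath_isChain (hf : MapsFacesIntoFaces KA KB f)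
    (hc : ∀ i : ZMod k, KA.inFace (c i) (c (i + 1))) (pos : Fin n → ZMod k)
    (l : List (Fin n)) : (normalPath f c pos l).IsChain KB.inFace := by
  induction l generalizing pos with
  | nil => exact List.isChain_singleton _
  | cons j l ih =>
    rw [normalPath_cons, List.isChain_cons, normalPath_head?]
    refine ⟨?_, ih _⟩
    rintro _ ⟨⟩
    obtain ⟨τ, hτ, hfτ⟩ := exists_face_forall_add_mem hf hc pos
    refine ⟨τ, hτ, by simpa using hfτ 0 (by simp), hfτ _ fun i => ?_⟩
    rcases eq_or_ne i j with rfl | hij <;> simp [*]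

theorem normalPath_homotopic_of_perm (hf : MapsFacesIntoFaces KA KB f)
    (hc : ∀ i : ZMod k, KA.inFace (c i) (c (i + 1))) {l₁ l₂ : List (Fin n)}
    (hl : l₁.Perm l₂) (pos : Fin n → ZMod k) :
    KB.Homotopic (normalPath f c pos l₁) (normalPath f c pos l₂) := by
  induction hl generalizing pos with
  | nil => exact .refl
  | cons j _ ih =>
    rw [normalPath_cons, normalPath_cons]
    exact (ih _).cons _
  | swap x y l =>
    rcases eq_or_ne x y with rfl | hne
    · exact .refl
    obtain ⟨tail, htail⟩ := normalPath_eq_cons (f := f) (c := c)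
      (pos + Pi.single x 1 + Pi.single y 1) l
    rw [normalPath_cons, normalPath_cons, normalPath_cons, normalPath_cons,
      add_right_comm pos, htail]
    obtain ⟨τ, hτ, hfτ⟩ := exists_face_forall_add_mem hf hc pos
    have h₀ : f (fun i => c (pos i)) ∈ τ := by simpa using hfτ 0 (by simp)
    have hx := hfτ (Pi.single x 1) fun i => by
      rcases eq_or_ne i x with rfl | h <;> simp [*]
    have hy := hfτ (Pi.single y 1) fun i => by
      rcases eq_or_ne i y with rfl | h <;> simp [*]
    have hxy := hfτ (Pi.single x 1 + Pi.single y 1) fun i => by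
      simp only [Pi.add_apply, Pi.single_apply]
      split_ifs <;> simp_all
    rw [← add_assoc] at hxy
    exact SComplex.homotopic_cons_cons_of_face tail ⟨τ, hτ, h₀, hy, hxy⟩ ⟨τ, hτ, h₀, hx, hxy⟩
  | trans _ _ ih₁ ih₂ => exact (ih₁ pos).trans (ih₂ pos)

end NormalPath

theorem normal_fPaths_perm_homotopic_general {VA VB : Type*}
    (KA : SComplex VA) (KB : SComplex VB) {n : ℕ}
    (f : (Fin n → VA) → VB)
    (hf : ∀ σ : Fin n → Finset VA, (∀ i, σ i ∈ KA.faces) →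
        ∃ τ ∈ KB.faces, (↑τ : Set VB) =
          {b : VB | ∃ t : Fin n → VA, (∀ i, t i ∈ σ i) ∧ b = f t})
    (k : ℕ) (c : ZMod k → VA)
    (hc : ∀ i : ZMod k, KA.inFace (c i) (c (i + 1)))
    (pos : Fin n → ZMod k) (a b : List (Fin n)) (hab : a.Perm b) :
    KB.IsPath (normalPath f c pos a) ∧ KB.IsPath (normalPath f c pos b) ∧
    (normalPath f c pos a).head? = (normalPath f c pos b).head? ∧
    (normalPath f c pos a).getLast? = (normalPath f c pos b).getLast? ∧
    KB.Homotopic (normalPath f c pos a) (normalPath f c pos b) := by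
  have hf' := MapsFacesIntoFaces.of_image_eq_face hf
  refine ⟨⟨normalPath_ne_nil _ _, normalPath_isChain hf' hc _ _⟩,
    ⟨normalPath_ne_nil _ _, normalPath_isChain hf' hc _ _⟩, ?_, ?_,
    normalPath_homotopic_of_perm hf' hc hab pos⟩
  · rw [normalPath_head?, normalPath_head?]
  · simp only [normalPath_getLast?, hab.count_eq]

/-- let `f : V(H^A)ⁿ → V(H^B)` map products of faces to faces and
let `C = t₁, …, t_k, t₁` be a cycle in `G(H^A)` (given by `c : ZMod k → V(H^A)`
with consecutive vertices adjacent). If `P₁ = v, a₁⁺, …, a_s⁺` and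
`P₂ = v, b₁⁺, …, b_s⁺` are normal `f`-paths starting at the same vertex `v`
(with the same argument tuple), where `b₁, …, b_s` is a permutation of
`a₁, …, a_s`, then `P₁` and `P₂` are paths in `H^B` with the same endpoints, and
they are homotopic in `H^B`. -/
theorem normal_fPaths_perm_homotopic {VA VB : Type*}
    (KA : SComplex VA) (KB : SComplex VB) {n : ℕ}
    (f : (Fin n → VA) → VB)
    (hf : ∀ σ : Fin n → Finset VA, (∀ i, σ i ∈ KA.faces) →
        ∃ τ ∈ KB.faces, (↑τ : Set VB) =
          {b : VB | ∃ t : Fin n → VA, (∀ i, t i ∈ σ i) ∧ b = f t})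
    (k : ℕ) (hk : 0 < k) (c : ZMod k → VA)
    (hc : ∀ i : ZMod k, KA.inFace (c i) (c (i + 1)))
    (pos : Fin n → ZMod k) (a b : List (Fin n)) (hab : a.Perm b) :
    KB.IsPath (normalPath f c pos a) ∧ KB.IsPath (normalPath f c pos b) ∧
    (normalPath f c pos a).head? = (normalPath f c pos b).head? ∧
    (normalPath f c pos a).getLast? = (normalPath f c pos b).getLast? ∧
    KB.Homotopic (normalPath f c pos a) (normalPath f c pos b) :=
  normal_fPaths_perm_homotopic_general KA KB f hf k c hc pos a b hab
end
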